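/- arXiv:1611.00898 — 8 statements merged into one kernel-verified Lean document; each statement's English description precedes it below -/
import Mathlib

section
/- Let A be a real n×d matrix, U a real n×k matrix, S a real m×n matrix, and c₁ ≥ 0, c₂ > 0 real numbers. Let V* be a real k×d matrix with ‖UV* − A‖₁ ≤ ‖UV − A‖₁ for all k×d matrices V. Suppose ‖S(UV* − A)‖₁ ≤ c₁ · ‖UV* − A‖₁ and ‖SUx‖₁ ≥ (1/c₂) · ‖Ux‖₁ for all x ∈ ℝᵏ. Then for every k×d matrix V, ‖SUV − SA‖₁ ≥ (1/c₂) · ‖UV − A‖₁ − (c₁ + 1/c₂) · ‖UV* − A‖₁. -/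
open Matrix

/-- The entrywise `ℓ₁` norm of a matrix. -/
noncomputable def l1M {n d : ℕ} (M : Matrix (Fin n) (Fin d) ℝ) : ℝ :=
  ∑ i, ∑ j, |M i j|

/-- The `ℓ₁` norm of a vector. -/
noncomputable def l1V {n : ℕ} (v : Fin n → ℝ) : ℝ :=
  ∑ i, |v i|

lemma l1M_add_le {n d : ℕ} (X Y : Matrix (Fin n) (Fin d) ℝ) :
    l1M (X + Y) ≤ l1M X + l1M Y := by
  unfold l1M
  rw [← Finset.sum_add_distrib]
  refine Finset.sum_le_sum fun i _ => ?_
  rw [← Finset.sum_add_distrib]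
  exact Finset.sum_le_sum fun j _ => abs_add_le _ _

lemma l1M_cols {n d : ℕ} (M : Matrix (Fin n) (Fin d) ℝ) :
    l1M M = ∑ j, l1V (fun i => M i j) := by
  unfold l1M l1V
  exact Finset.sum_comm

lemma col_mul {p q r : ℕ} (S : Matrix (Fin p) (Fin q) ℝ)
    (M : Matrix (Fin q) (Fin r) ℝ) (j : Fin r) :
    (fun i => (S * M) i j) = S.mulVec (fun l => M l j) := by
  funext i
  simp [Matrix.mul_apply, Matrix.mulVec, dotProduct]

/-- No dilation plus no contraction imply a general contraction bound: if `S` has at most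
`c₁`-dilation on `UV* − A` and at most `c₂`-contraction on `U`, then for all `V`,
`‖SUV − SA‖₁ ≥ (1/c₂)‖UV − A‖₁ − (c₁ + 1/c₂)‖UV* − A‖₁`. -/
theorem no_dilation_no_contraction_imply_general_no_contraction {n d k m : ℕ}
    (A : Matrix (Fin n) (Fin d) ℝ) (U : Matrix (Fin n) (Fin k) ℝ)
    (S : Matrix (Fin m) (Fin n) ℝ)
    (c₁ c₂ : ℝ) (hc₁ : 0 ≤ c₁) (hc₂ : 0 < c₂)
    (Vstar : Matrix (Fin k) (Fin d) ℝ)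
    (hVstar : ∀ V : Matrix (Fin k) (Fin d) ℝ, l1M (U * Vstar - A) ≤ l1M (U * V - A))
    (hdil : l1M (S * (U * Vstar - A)) ≤ c₁ * l1M (U * Vstar - A))
    (hcon : ∀ x : Fin k → ℝ, (1 / c₂) * l1V (U.mulVec x) ≤ l1V (S.mulVec (U.mulVec x))) :
    ∀ V : Matrix (Fin k) (Fin d) ℝ,
      (1 / c₂) * l1M (U * V - A) - (c₁ + 1 / c₂) * l1M (U * Vstar - A) ≤
        l1M (S * U * V - S * A) := by
  intro V
  have hdecomp : S * U * V - S * A = S * (U * (V - Vstar)) + S * (U * Vstar - A) := by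
    simp only [Matrix.mul_sub, Matrix.mul_assoc]
    abel
  -- columnwise contraction
  have hmain : (1 / c₂) * l1M (U * (V - Vstar)) ≤ l1M (S * (U * (V - Vstar))) := by
    rw [l1M_cols, l1M_cols, Finset.mul_sum]
    refine Finset.sum_le_sum fun j _ => ?_
    have h1 : (fun i => (S * (U * (V - Vstar))) i j)
        = S.mulVec (U.mulVec (fun l => (V - Vstar) l j)) := by
      rw [col_mul S (U * (V - Vstar)) j, ← col_mul U (V - Vstar) j]
    have h2 := col_mul U (V - Vstar) j
    rw [h1, h2]
    exact hcon _
  -- reverse triangle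
  have hneg : l1M (-(S * (U * Vstar - A))) = l1M (S * (U * Vstar - A)) := by
    unfold l1M; simp
  have htri : l1M (S * (U * (V - Vstar))) - l1M (S * (U * Vstar - A))
      ≤ l1M (S * U * V - S * A) := by
    have h := l1M_add_le (S * U * V - S * A) (-(S * (U * Vstar - A)))
    have he : S * U * V - S * A + -(S * (U * Vstar - A)) = S * (U * (V - Vstar)) := by
      rw [hdecomp]; abel
    rw [he, hneg] at h
    linarith
  -- triangle on unsketched side
  have htri2 : l1M (U * V - A) - l1M (U * Vstar - A) ≤ l1M (U * (V - Vstar)) := by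
    have heq : U * V - A = U * (V - Vstar) + (U * Vstar - A) := by
      simp only [Matrix.mul_sub]; abel
    have h := l1M_add_le (U * (V - Vstar)) (U * Vstar - A)
    rw [← heq] at h
    linarith
  have hmul : (1 / c₂) * (l1M (U * V - A) - l1M (U * Vstar - A))
      ≤ (1 / c₂) * l1M (U * (V - Vstar)) :=
    mul_le_mul_of_nonneg_left htri2 (by positivity)
  nlinarith [hmain, htri, hdil, hmul]
end

section
/- Let A be a real n×d matrix, U a real n×k matrix, S a real m×n matrix, and c₁ ≥ 0, c₂ > 0, c ≥ 1 real numbers. Let V* be a real k×d matrix with ‖UV* − A‖₁ ≤ ‖UV − A‖₁ for all k×d matrices V. Suppose ‖S(UV* − A)‖₁ ≤ c₁ · ‖UV* − A‖₁ and ‖SUx‖₁ ≥ (1/c₂) · ‖Ux‖₁ for all x ∈ ℝᵏ. Then any k×d matrix V̂ satisfying ‖SUV̂ − SA‖₁ ≤ c · ‖SUV − SA‖₁ for all k×d matrices V also satisfies ‖UV̂ − A‖₁ ≤ c · (2c₁c₂ + 1) · ‖UV* − A‖₁. -/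
open Matrix

lemma l1M_nonneg {n d : ℕ} (X : Matrix (Fin n) (Fin d) ℝ) : 0 ≤ l1M X := by
  unfold l1M; positivity

lemma l1M_mul_eq {n d k : ℕ} (U : Matrix (Fin n) (Fin k) ℝ)
    (W : Matrix (Fin k) (Fin d) ℝ) :
    l1M (U * W) = ∑ j, l1V (U.mulVec (fun i => W i j)) := by
  unfold l1M l1V
  rw [Finset.sum_comm]
  simp [Matrix.mul_apply, Matrix.mulVec, dotProduct]

/-- A sketch `S` with at most `c₁`-dilation on `UV* − A` and at most `c₂`-contraction on `U`
provides a `(2c₁c₂ + 1)`-multiple-regression-cost preserving sketch: any `c`-approximate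
minimizer `V̂` of the sketched problem is a `c(2c₁c₂ + 1)`-approximate solution to
the original problem. -/
theorem multiple_regression_cost_preserving_sketch {n d k m : ℕ}
    (A : Matrix (Fin n) (Fin d) ℝ) (U : Matrix (Fin n) (Fin k) ℝ)
    (S : Matrix (Fin m) (Fin n) ℝ)
    (c₁ c₂ c : ℝ) (hc₁ : 0 ≤ c₁) (hc₂ : 0 < c₂) (hc : 1 ≤ c)
    (Vstar : Matrix (Fin k) (Fin d) ℝ)
    (hVstar : ∀ V : Matrix (Fin k) (Fin d) ℝ, l1M (U * Vstar - A) ≤ l1M (U * V - A))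
    (hdil : l1M (S * (U * Vstar - A)) ≤ c₁ * l1M (U * Vstar - A))
    (hcon : ∀ x : Fin k → ℝ, (1 / c₂) * l1V (U.mulVec x) ≤ l1V (S.mulVec (U.mulVec x)))
    (Vhat : Matrix (Fin k) (Fin d) ℝ)
    (hVhat : ∀ V : Matrix (Fin k) (Fin d) ℝ,
      l1M (S * U * Vhat - S * A) ≤ c * l1M (S * U * V - S * A)) :
    l1M (U * Vhat - A) ≤ c * (2 * c₁ * c₂ + 1) * l1M (U * Vstar - A) := by
  set E := l1M (U * Vstar - A) with hE
  have hEnn : 0 ≤ E := l1M_nonneg _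
  -- matrix-level contraction
  have hconM : ∀ W : Matrix (Fin k) (Fin d) ℝ,
      (1 / c₂) * l1M (U * W) ≤ l1M (S * (U * W)) := by
    intro W
    rw [l1M_mul_eq, ← Matrix.mul_assoc, l1M_mul_eq (S * U) W, Finset.mul_sum]
    refine Finset.sum_le_sum fun j _ => ?_
    have := hcon (fun i => W i j)
    simpa [Matrix.mulVec_mulVec] using this
  -- sketched cost of Vstar
  have hX : l1M (S * U * Vstar - S * A) ≤ c₁ * E := by
    have : S * U * Vstar - S * A = S * (U * Vstar - A) := by
      rw [Matrix.mul_sub, Matrix.mul_assoc]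
    rw [this]; exact hdil
  -- sketched cost of Vhat
  have hhat : l1M (S * U * Vhat - S * A) ≤ c * (c₁ * E) :=
    le_trans (hVhat Vstar) (by
      have := hX
      nlinarith [l1M_nonneg (S * U * Vstar - S * A)])
  -- bound l1M (S * (U * (Vhat - Vstar)))
  have hsk : l1M (S * (U * (Vhat - Vstar))) ≤ (c + 1) * (c₁ * E) := by
    have heq : S * (U * (Vhat - Vstar)) =
        (S * U * Vhat - S * A) + -(S * U * Vstar - S * A) := by
      rw [Matrix.mul_sub U, Matrix.mul_sub S, ← Matrix.mul_assoc, ← Matrix.mul_assoc]; abel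
    calc l1M (S * (U * (Vhat - Vstar)))
        ≤ l1M (S * U * Vhat - S * A) + l1M (-(S * U * Vstar - S * A)) := by
          rw [heq]; exact l1M_add_le _ _
      _ = l1M (S * U * Vhat - S * A) + l1M (S * U * Vstar - S * A) := by
          unfold l1M; simp [abs_sub_comm]
      _ ≤ c * (c₁ * E) + c₁ * E := add_le_add hhat hX
      _ = (c + 1) * (c₁ * E) := by ring
  have hUW : l1M (U * (Vhat - Vstar)) ≤ c₂ * ((c + 1) * (c₁ * E)) := by
    have h1 := hconM (Vhat - Vstar)
    rw [one_div, inv_mul_le_iff₀ hc₂] at h1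
    exact h1.trans (mul_le_mul_of_nonneg_left hsk hc₂.le)
  have htri : l1M (U * Vhat - A) ≤ l1M (U * (Vhat - Vstar)) + E := by
    have heq : U * Vhat - A = U * (Vhat - Vstar) + (U * Vstar - A) := by
      rw [Matrix.mul_sub]; abel
    rw [heq, hE]; exact l1M_add_le _ _
  have h3 : 0 ≤ c₁ * c₂ * ((c - 1) * E) :=
    mul_nonneg (mul_nonneg hc₁ hc₂.le) (mul_nonneg (by linarith) hEnn)
  have h4 : 0 ≤ (c - 1) * E := mul_nonneg (by linarith) hEnn
  nlinarith [hUW, htri, h3, h4]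
end

section
/- Let U be a real n×k matrix, S a real m×n matrix, and α, β, D ≥ 1 and ε > 0 real numbers with ε·α·β·k·D ≤ 1/4. Assume: (a) ‖Ux‖₁ ≤ α‖x‖₁ for all x ∈ ℝᵏ; (b) ‖Ux‖₁ ≥ ‖x‖₁/(βk) for all x ∈ ℝᵏ; (c) N is a subset of {z ∈ ℝᵏ : ‖z‖₁ = 1} such that for every z with ‖z‖₁ = 1 there exists y ∈ N with ‖y − z‖₁ ≤ ε; (d) ‖SUy‖₁ ≥ ‖Uy‖₁ for every y ∈ N; (e) ‖SUx‖₁ ≤ D·‖Ux‖₁ for all x ∈ ℝᵏ. Then ‖SUw‖₁ ≥ (1/2)·‖Uw‖₁ for all w ∈ ℝᵏ. -/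
open Matrix

/-
The net point `y` nearest to the normalised `z` is not contracted by `S`, and replacing `z` by `y`
moves `Uz` by at most `αε` and `SUz` by at most `Dαε` in `ℓ₁`. Hence
`‖Uz‖₁ ≤ ‖SUz‖₁ + (1 + D)αε`, and the smallness condition makes `(1 + D)αε` at most
`1/(2βk) ≤ ‖Uz‖₁ / 2`. Homogeneity extends the bound from the unit sphere to all of `ℝᵏ`.
-/

section l1V

variable {n : ℕ}

lemma l1V_eq_norm (v : Fin n → ℝ) : l1V v = ‖WithLp.toLp 1 v‖ := by
  simp [l1V, PiLp.norm_eq_of_L1]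

lemma l1V_nonneg (v : Fin n → ℝ) : 0 ≤ l1V v := by
  rw [l1V_eq_norm]
  exact norm_nonneg _

lemma l1V_eq_zero_iff {v : Fin n → ℝ} : l1V v = 0 ↔ v = 0 := by
  rw [l1V_eq_norm, norm_eq_zero, WithLp.toLp_eq_zero]

lemma l1V_smul (c : ℝ) (v : Fin n → ℝ) : l1V (c • v) = |c| * l1V v := by
  rw [l1V_eq_norm, l1V_eq_norm, WithLp.toLp_smul, norm_smul, Real.norm_eq_abs]

lemma l1V_add_le (u v : Fin n → ℝ) : l1V (u + v) ≤ l1V u + l1V v := by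
  simpa only [l1V_eq_norm, WithLp.toLp_add] using norm_add_le _ _

lemma l1V_sub_comm (u v : Fin n → ℝ) : l1V (u - v) = l1V (v - u) := by
  rw [l1V_eq_norm, l1V_eq_norm, WithLp.toLp_sub, WithLp.toLp_sub, norm_sub_rev]

end l1V

lemma l1V_mulVec_le_add_sub {n k : ℕ} (A : Matrix (Fin n) (Fin k) ℝ) (x y : Fin k → ℝ) :
    l1V (A *ᵥ x) ≤ l1V (A *ᵥ y) + l1V (A *ᵥ (x - y)) := by
  simpa only [mulVec_sub, add_sub_cancel] using l1V_add_le (A *ᵥ y) (A *ᵥ (x - y))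

lemma le_l1V_mulVec_of_forall_l1V_eq_one {n m k : ℕ} (A : Matrix (Fin n) (Fin k) ℝ)
    (B : Matrix (Fin m) (Fin k) ℝ) (c : ℝ)
    (h : ∀ z : Fin k → ℝ, l1V z = 1 → c * l1V (A *ᵥ z) ≤ l1V (B *ᵥ z)) (w : Fin k → ℝ) :
    c * l1V (A *ᵥ w) ≤ l1V (B *ᵥ w) := by
  rcases eq_or_ne w 0 with rfl | hw
  · simp [l1V]
  have hw_pos : 0 < l1V w := (l1V_nonneg w).lt_of_ne' (l1V_eq_zero_iff.not.mpr hw)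
  obtain ⟨r, z, hr, hz, rfl⟩ : ∃ (r : ℝ) (z : Fin k → ℝ), 0 < r ∧ l1V z = 1 ∧ w = r • z := by
    refine ⟨l1V w, (l1V w)⁻¹ • w, hw_pos, ?_, (smul_inv_smul₀ hw_pos.ne' w).symm⟩
    rw [l1V_smul, abs_inv, abs_of_pos hw_pos, inv_mul_cancel₀ hw_pos.ne']
  rw [mulVec_smul, mulVec_smul, l1V_smul, l1V_smul, abs_of_pos hr, mul_left_comm]
  exact mul_le_mul_of_nonneg_left (h z hz) hr.le

lemma l1V_mulVec_le_of_near {n m k : ℕ} {U : Matrix (Fin n) (Fin k) ℝ}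
    {B : Matrix (Fin m) (Fin k) ℝ} {α D ε : ℝ} (hα : 0 ≤ α) (hD : 0 ≤ D)
    (hU : ∀ x : Fin k → ℝ, l1V (U *ᵥ x) ≤ α * l1V x)
    (hB : ∀ x : Fin k → ℝ, l1V (B *ᵥ x) ≤ D * l1V (U *ᵥ x))
    {y z : Fin k → ℝ} (hy : l1V (U *ᵥ y) ≤ l1V (B *ᵥ y)) (hyz : l1V (y - z) ≤ ε) :
    l1V (U *ᵥ z) ≤ l1V (B *ᵥ z) + (1 + D) * (α * ε) := by
  have hUyz : l1V (U *ᵥ (y - z)) ≤ α * ε := (hU _).trans (mul_le_mul_of_nonneg_left hyz hα)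
  have hBy : l1V (B *ᵥ y) ≤ l1V (B *ᵥ z) + D * (α * ε) :=
    calc l1V (B *ᵥ y) ≤ l1V (B *ᵥ z) + l1V (B *ᵥ (y - z)) := l1V_mulVec_le_add_sub B y z
      _ ≤ l1V (B *ᵥ z) + D * (α * ε) := by
        gcongr
        exact (hB _).trans (mul_le_mul_of_nonneg_left hUyz hD)
  calc l1V (U *ᵥ z) ≤ l1V (U *ᵥ y) + l1V (U *ᵥ (y - z)) := by
        simpa only [mulVec_sub, l1V_sub_comm (U *ᵥ z)] using l1V_mulVec_le_add_sub U z y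
    _ ≤ l1V (B *ᵥ z) + (1 + D) * (α * ε) := by linarith

theorem net_argument_no_contraction_general {n k m : ℕ}
    (U : Matrix (Fin n) (Fin k) ℝ) (S : Matrix (Fin m) (Fin n) ℝ)
    (α β D ε : ℝ) (hα : 1 ≤ α) (hβ : 1 ≤ β) (hD : 1 ≤ D)
    (hsmall : ε * α * β * k * D ≤ 1 / 4)
    (ha : ∀ x : Fin k → ℝ, l1V (U.mulVec x) ≤ α * l1V x)
    (hb : ∀ x : Fin k → ℝ, l1V x / (β * k) ≤ l1V (U.mulVec x))
    (Nset : Set (Fin k → ℝ))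
    (hNnet : ∀ z : Fin k → ℝ, l1V z = 1 → ∃ y ∈ Nset, l1V (y - z) ≤ ε)
    (hd : ∀ y ∈ Nset, l1V (U.mulVec y) ≤ l1V (S.mulVec (U.mulVec y)))
    (he : ∀ x : Fin k → ℝ, l1V (S.mulVec (U.mulVec x)) ≤ D * l1V (U.mulVec x)) :
    ∀ w : Fin k → ℝ, (1 / 2) * l1V (U.mulVec w) ≤ l1V (S.mulVec (U.mulVec w)) := by
  simp only [mulVec_mulVec] at hd he ⊢
  refine le_l1V_mulVec_of_forall_l1V_eq_one U (S * U) _ fun z hz => ?_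
  obtain ⟨y, hyN, hyz⟩ := hNnet z hz
  have hk : (0 : ℝ) < k := by
    rcases Nat.eq_zero_or_pos k with rfl | hk
    · simp [l1V] at hz
    · exact_mod_cast hk
  have hnear := l1V_mulVec_le_of_near (by linarith) (by linarith) ha he (hd y hyN) hyz
  have hlower : 1 / (β * k) ≤ l1V (U *ᵥ z) := by simpa [hz] using hb z
  have hε : 0 ≤ ε := (l1V_nonneg _).trans hyz
  have hslack : (1 + D) * (α * ε) ≤ 1 / 2 * (1 / (β * k)) := by
    have hprod : 0 ≤ α * ε * β * k := by positivity
    rw [← div_mul_eq_div_mul_one_div, le_div_iff₀ (by positivity)]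
    nlinarith [mul_nonneg hprod (sub_nonneg.mpr hD)]
  linarith

/-- Net argument: suppose `U` is an `(α, β)` `ℓ₁` well-conditioned basis, `N` is an `ε`-net of
the `ℓ₁` unit sphere on which `S` does not contract vectors `Uy`, and `S` dilates every `Ux` by
at most `D`; if `ε·α·β·k·D ≤ 1/4`, then `‖SUw‖₁ ≥ ‖Uw‖₁ / 2` for all `w`. -/
theorem net_argument_no_contraction {n k m : ℕ}
    (U : Matrix (Fin n) (Fin k) ℝ) (S : Matrix (Fin m) (Fin n) ℝ)
    (α β D ε : ℝ) (hα : 1 ≤ α) (hβ : 1 ≤ β) (hD : 1 ≤ D) (hε : 0 < ε)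
    (hsmall : ε * α * β * k * D ≤ 1 / 4)
    (ha : ∀ x : Fin k → ℝ, l1V (U.mulVec x) ≤ α * l1V x)
    (hb : ∀ x : Fin k → ℝ, l1V x / (β * k) ≤ l1V (U.mulVec x))
    (Nset : Set (Fin k → ℝ)) (hNsub : Nset ⊆ {z : Fin k → ℝ | l1V z = 1})
    (hNnet : ∀ z : Fin k → ℝ, l1V z = 1 → ∃ y ∈ Nset, l1V (y - z) ≤ ε)
    (hd : ∀ y ∈ Nset, l1V (U.mulVec y) ≤ l1V (S.mulVec (U.mulVec y)))
    (he : ∀ x : Fin k → ℝ, l1V (S.mulVec (U.mulVec x)) ≤ D * l1V (U.mulVec x)) :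
    ∀ w : Fin k → ℝ, (1 / 2) * l1V (U.mulVec w) ≤ l1V (S.mulVec (U.mulVec w)) :=
  net_argument_no_contraction_general U S α β D ε hα hβ hD hsmall ha hb Nset hNnet hd he
end

section
/- Let d ≥ 2 and let A be the real (d−1)×d matrix whose first column has every entry equal to 1 and whose remaining d−1 columns form the identity matrix (A_{i,1} = 1 for all i, and for 1 ≤ i, j ≤ d−1, A_{i,j+1} = 1 if i = j and 0 otherwise). Then: (i) there exists a (d−1)×d matrix A' of rank at most 1 with ‖A − A'‖₁ ≤ d−1; (ii) for every subset S of the row indices {1, …, d−1} and every (d−1)×d matrix B each of whose rows lies in the linear span of the rows of A indexed by S, one has ‖A − B‖₁ ≥ 2·(d − 1 − |S|). -/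
open Matrix

/-- Hard instance for row subset selection: let `A` be the `(d−1) × d` matrix whose first column
is all ones and whose remaining columns form an identity matrix. Then (i) some rank-`1` matrix
`A'` satisfies `‖A − A'‖₁ ≤ d − 1`, and (ii) any matrix `B` whose rows lie in the span of the
rows of `A` indexed by a subset `S` satisfies `‖A − B‖₁ ≥ 2(d − 1 − |S|)`. -/
theorem row_subset_selection_hard_instance {d : ℕ} (hd : 2 ≤ d)
    (A : Matrix (Fin (d - 1)) (Fin d) ℝ)
    (hA : ∀ (i : Fin (d - 1)) (j : Fin d),
      A i j = if (j : ℕ) = 0 then 1 else if (j : ℕ) = (i : ℕ) + 1 then 1 else 0) :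
    (∃ A' : Matrix (Fin (d - 1)) (Fin d) ℝ, A'.rank ≤ 1 ∧ l1M (A - A') ≤ (d : ℝ) - 1) ∧
    (∀ (S : Finset (Fin (d - 1))) (B : Matrix (Fin (d - 1)) (Fin d) ℝ),
      (∀ i : Fin (d - 1), B i ∈ Submodule.span ℝ (A '' (S : Set (Fin (d - 1))))) →
      2 * ((d : ℝ) - 1 - (S.card : ℝ)) ≤ l1M (A - B)) := by
  have hdc : ((d - 1 : ℕ) : ℝ) = (d : ℝ) - 1 := by
    rw [Nat.cast_sub (by omega : 1 ≤ d)]; simp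
  set emb : Fin (d - 1) → Fin d := fun i => ⟨(i : ℕ) + 1, by have := i.isLt; omega⟩ with hemb
  have hembinj : Function.Injective emb := by
    intro a b hab
    have : (a : ℕ) + 1 = (b : ℕ) + 1 := congrArg Fin.val hab
    exact Fin.ext (by omega)
  have col0 : Fin d := ⟨0, by omega⟩
  have hA0 : ∀ i, A i ⟨0, by omega⟩ = 1 := by intro i; rw [hA]; simp
  have hAemb : ∀ i s, A i (emb s) = if (s : ℕ) = (i : ℕ) then 1 else 0 := by
    intro i s; rw [hA]; simp [hemb]
  constructor
  · -- part (i)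
    refine ⟨(Matrix.of fun (_ : Fin (d-1)) (_ : Fin 1) => (1:ℝ)) *
        (Matrix.of fun (_ : Fin 1) (j : Fin d) => if (j : ℕ) = 0 then (1:ℝ) else 0), ?_, ?_⟩
    · calc _ ≤ Matrix.rank (Matrix.of fun (_ : Fin (d-1)) (_ : Fin 1) => (1:ℝ)) :=
            Matrix.rank_mul_le_left _ _
        _ ≤ Fintype.card (Fin 1) := Matrix.rank_le_card_width _
        _ = 1 := by simp
    · have hent : ∀ (i : Fin (d-1)) (j : Fin d),
          |A i j - ((Matrix.of fun (_ : Fin (d-1)) (_ : Fin 1) => (1:ℝ)) *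
            (Matrix.of fun (_ : Fin 1) (j : Fin d) => if (j : ℕ) = 0 then (1:ℝ) else 0)) i j|
          = if j = emb i then 1 else 0 := by
        intro i j
        have hmul : ((Matrix.of fun (_ : Fin (d-1)) (_ : Fin 1) => (1:ℝ)) *
            (Matrix.of fun (_ : Fin 1) (j : Fin d) => if (j : ℕ) = 0 then (1:ℝ) else 0)) i j
            = if (j : ℕ) = 0 then (1:ℝ) else 0 := by
          simp [Matrix.mul_apply]
        rw [hmul, hA]
        have hj : j = emb i ↔ (j : ℕ) = (i : ℕ) + 1 := by
          constructor
          · intro h; rw [h]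
          · intro h; exact Fin.ext h
        split_ifs with h1 h2 h3 h3 h2 <;> simp_all <;> omega
      rw [l1M]
      simp only [Matrix.sub_apply]
      have : ∀ i : Fin (d-1), ∑ j, |A i j - ((Matrix.of fun (_ : Fin (d-1)) (_ : Fin 1) => (1:ℝ)) *
            (Matrix.of fun (_ : Fin 1) (j : Fin d) => if (j : ℕ) = 0 then (1:ℝ) else 0)) i j|
          = 1 := by
        intro i
        calc ∑ j, |A i j - _| = ∑ j, if j = emb i then (1:ℝ) else 0 := by
              refine Finset.sum_congr rfl fun j _ => ?_
              exact hent i j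
          _ = 1 := by simp
      rw [Finset.sum_congr rfl fun i _ => this i]
      simp only [Finset.sum_const, Finset.card_univ, Fintype.card_fin, nsmul_eq_mul, mul_one]
      rw [hdc]
  · -- part (ii)
    intro S B hB
    have hrel' : ∀ x ∈ Submodule.span ℝ (A '' (S : Set (Fin (d-1)))),
        x (⟨0, by omega⟩ : Fin d) = ∑ s ∈ S, x (emb s) := by
      intro x hx
      induction hx using Submodule.span_induction with
      | mem x hx =>
        obtain ⟨t, ht, rfl⟩ := hx
        have ht' : t ∈ S := ht
        rw [hA0]
        rw [Finset.sum_congr rfl fun s _ => hAemb t s]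
        simp only [Fin.val_inj]
        rw [Finset.sum_ite_eq' S t (fun _ => (1:ℝ))]
        simp [ht']
      | zero => simp
      | add x y hx hy ihx ihy => simp [ihx, ihy, Finset.sum_add_distrib]
      | smul a x hx ihx => simp [ihx, Finset.mul_sum]
    have hrel : ∀ i, B i ⟨0, by omega⟩ = ∑ s ∈ S, B i (emb s) :=
      fun i => hrel' (B i) (hB i)
    have hzero' : ∀ i ∉ S, ∀ x ∈ Submodule.span ℝ (A '' (S : Set (Fin (d-1)))),
        x (emb i) = 0 := by
      intro i hi x hx
      induction hx using Submodule.span_induction with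
      | mem x hx =>
        obtain ⟨t, ht, rfl⟩ := hx
        have ht' : t ∈ S := ht
        rw [hAemb]
        have : (t : ℕ) ≠ (i : ℕ) := fun h => hi (Fin.ext h ▸ ht')
        simp [Ne.symm this]
      | zero => simp
      | add x y hx hy ihx ihy => simp [ihx, ihy]
      | smul a x hx ihx => simp [ihx]
    have hzero : ∀ i ∉ S, B i (emb i) = 0 := fun i hi => hzero' i hi (B i) (hB i)
    -- per-row bound for i ∉ S
    have hrow : ∀ i ∉ S, (2:ℝ) ≤ ∑ j, |(A - B) i j| := by
      intro i hi
      set T : Finset (Fin d) := insert ⟨0, by omega⟩ (insert (emb i) (S.image emb)) with hT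
      have h0ne : (⟨0, by omega⟩ : Fin d) ∉ insert (emb i) (S.image emb) := by
        simp only [Finset.mem_insert, Finset.mem_image]
        push_neg
        constructor
        · intro h; have := congrArg Fin.val h; simp [hemb] at this
        · intro s _ h; have := congrArg Fin.val h; simp [hemb] at this
      have hine : emb i ∉ S.image emb := by
        simp only [Finset.mem_image]
        rintro ⟨s, hs, h⟩
        exact hi (hembinj h ▸ hs)
      have hsub : ∑ j ∈ T, |(A - B) i j| ≤ ∑ j, |(A - B) i j| :=
        Finset.sum_le_sum_of_subset_of_nonneg (Finset.subset_univ _)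
          (fun j _ _ => abs_nonneg _)
      refine le_trans ?_ hsub
      rw [hT, Finset.sum_insert h0ne, Finset.sum_insert hine,
        Finset.sum_image (fun a _ b _ h => hembinj h)]
      have e1 : (A - B) i ⟨0, by omega⟩ = 1 - B i ⟨0, by omega⟩ := by
        simp [Matrix.sub_apply, hA0]
      have e2 : (A - B) i (emb i) = 1 := by
        simp [Matrix.sub_apply, hAemb, hzero i hi]
      have e3 : ∀ s ∈ S, (A - B) i (emb s) = - B i (emb s) := by
        intro s hs
        have : (s : ℕ) ≠ (i : ℕ) := fun h => hi (Fin.ext h ▸ hs)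
        simp [Matrix.sub_apply, hAemb, this]
      rw [e1, e2, Finset.sum_congr rfl fun s hs => by rw [e3 s hs]]
      simp only [abs_neg, abs_one]
      have h1 : |B i ⟨0, by omega⟩| ≤ ∑ s ∈ S, |B i (emb s)| := by
        rw [hrel i]; exact Finset.abs_sum_le_sum_abs _ _
      have h2 : (1:ℝ) ≤ |1 - B i ⟨0, by omega⟩| + |B i ⟨0, by omega⟩| := by
        have := abs_sub_abs_le_abs_sub (1:ℝ) (B i ⟨0, by omega⟩)
        have h3 := abs_add_le (1 - B i ⟨0, by omega⟩) (B i ⟨0, by omega⟩)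
        simp only [sub_add_cancel] at h3
        simpa using h3
      linarith
    -- sum over rows
    have hcard : S.card ≤ d - 1 := le_trans (Finset.card_le_univ S) (by simp)
    have hSc : ((Sᶜ : Finset (Fin (d-1))).card : ℝ) = (d : ℝ) - 1 - S.card := by
      rw [Finset.card_compl, Fintype.card_fin, Nat.cast_sub hcard, hdc]
    calc 2 * ((d : ℝ) - 1 - S.card) = ∑ _i ∈ Sᶜ, (2:ℝ) := by
          rw [Finset.sum_const, nsmul_eq_mul, hSc]; ring
      _ ≤ ∑ i ∈ Sᶜ, ∑ j, |(A - B) i j| := by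
          refine Finset.sum_le_sum fun i hi => hrow i (Finset.mem_compl.mp hi)
      _ ≤ ∑ i, ∑ j, |(A - B) i j| :=
          Finset.sum_le_sum_of_subset_of_nonneg (Finset.subset_univ _)
            (fun i _ _ => Finset.sum_nonneg fun j _ => abs_nonneg _)
      _ = l1M (A - B) := rfl
end

section
/- Let d ≥ 2 and let A be the real (d−1)×d matrix whose first column has every entry equal to 1 and whose remaining d−1 columns form the identity matrix (A_{i,1} = 1 for all i, and for 1 ≤ i, j ≤ d−1, A_{i,j+1} = 1 if i = j and 0 otherwise). Then for all vectors α, β ∈ ℝ^{d−1}, Σ_{j=1}^{d−1} ‖A^j − α_j · (Σ_{i=1}^{d−1} β_i A^i)‖₁ ≥ 2(d−2); in other words, every (d−1)×d matrix of rank at most 1 all of whose rows lie in the row span of A has entrywise ℓ1-distance at least 2(d−2) from A. -/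
/-!
Put `s = ∑ i, β i`, `σ = ∑ i, |β i|` and `a = α j`. The combination `∑ i, β i • A i` is the
vector `(s, β)`, so row `j` costs `|1 - a s| + |1 - a β j| + |a| (σ - |β j|)`. Treating the
regimes `|a s| ≤ 1` and `|a s| ≥ 1` separately shows that this is at least `2 - e j / |s|`, where
`e j = max (|s| + 2 |β j| - σ) 0`. The excesses satisfy `∑ j, e j ≤ 2 |s|`: already
`∑ j ∈ T, (|s| + 2 |β j| - σ) ≤ 2 |s|` for every set `T` of rows, by the triangle inequality
when `T` is a singleton and because `|s| ≤ σ` and `∑ j ∈ T, |β j| ≤ σ` when `#T ≥ 2`.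
Summing over the `d - 1` rows gives `2 (d - 1) - 2`.
-/

open Matrix Finset

lemma two_sub_max_div_abs_le (a s b ρ : ℝ) (h : |s - b| ≤ ρ) :
    2 - max (|s| + |b| - ρ) 0 / |s| ≤ |1 - a * s| + |1 - a * b| + |a| * ρ := by
  rw [sub_le_comm]
  have hC0 : 0 ≤ |1 - a * s| + |1 - a * b| + |a| * ρ := by
    have : 0 ≤ ρ := (abs_nonneg _).trans h
    positivity
  set C := |1 - a * s| + |1 - a * b| + |a| * ρ
  set N := max (|s| + |b| - ρ) 0
  have hN : |s| + |b| - ρ ≤ N := le_max_left _ _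
  have hN0 : 0 ≤ N := le_max_right _ _
  have h1s : 1 - |a| * |s| ≤ |1 - a * s| := by
    simpa [abs_mul] using abs_sub_abs_le_abs_sub (1 : ℝ) (a * s)
  have h1b : 1 - |a| * |b| ≤ |1 - a * b| := by
    simpa [abs_mul] using abs_sub_abs_le_abs_sub (1 : ℝ) (a * b)
  have hsb : |a| * |s - b| ≤ |1 - a * s| + |1 - a * b| := by
    have := abs_sub (1 - a * b) (1 - a * s)
    rwa [show 1 - a * b - (1 - a * s) = a * (s - b) by ring, abs_mul, add_comm] at this
  have near : 2 - C ≤ |a| * N := by nlinarith [abs_nonneg a]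
  have far : |a| * (2 * |s| - N) ≤ C := by
    nlinarith [abs_nonneg a, abs_sub_abs_le_abs_sub s b]
  -- For `s = 0` the junk value `N / 0 = 0` is still right: the hypothesis forces `N = 0`.
  rcases eq_or_ne s 0 with rfl | hs
  · have : N = 0 := max_eq_right (by simpa using h)
    rw [this, mul_zero] at near
    rw [abs_zero, div_zero]
    linarith
  rw [le_div_iff₀ (abs_pos.2 hs)]
  rcases le_total (|a| * |s|) 1 with ha | ha
  · nlinarith [mul_le_mul_of_nonneg_right near (abs_nonneg s), mul_le_mul_of_nonneg_right ha hN0]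
  · rcases le_total (2 * |s|) N with hsN | hsN
    · nlinarith [abs_nonneg s]
    · nlinarith [mul_le_mul_of_nonneg_right far (abs_nonneg s),
        mul_le_mul_of_nonneg_right ha (sub_nonneg.2 hsN)]

section

variable {ι : Type*} [Fintype ι] [DecidableEq ι] (β : ι → ℝ)

lemma abs_sum_sub_le_sum_erase_abs (j : ι) :
    |∑ i, β i - β j| ≤ ∑ i ∈ univ.erase j, |β i| := by
  rw [← sum_erase_eq_sub (mem_univ j)]
  exact abs_sum_le_sum_abs _ _

lemma sum_abs_sum_add_abs_sub_sum_erase_abs_le (T : Finset ι) :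
    ∑ j ∈ T, (|∑ i, β i| + |β j| - ∑ i ∈ univ.erase j, |β i|) ≤ 2 * |∑ i, β i| := by
  rcases Nat.lt_or_ge #T 2 with hT | hT
  · interval_cases h : #T
    · simp [card_eq_zero.1 h]
    · obtain ⟨k, rfl⟩ := card_eq_one.1 h
      have := abs_sub_abs_le_abs_sub (β k) (∑ i, β i)
      rw [abs_sub_comm] at this
      simp only [sum_singleton]
      linarith [abs_sum_sub_le_sum_erase_abs β k]
  · set σ := ∑ i, |β i|
    have hs : |∑ i, β i| ≤ σ := abs_sum_le_sum_abs _ _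
    have hTσ : ∑ j ∈ T, |β j| ≤ σ := sum_le_univ_sum_of_nonneg fun _ => abs_nonneg _
    have hT2 : (2 : ℝ) ≤ #T := by exact_mod_cast hT
    calc ∑ j ∈ T, (|∑ i, β i| + |β j| - ∑ i ∈ univ.erase j, |β i|)
        = ∑ j ∈ T, ((|∑ i, β i| - σ) + 2 * |β j|) :=
          sum_congr rfl fun j _ => by rw [sum_erase_eq_sub (mem_univ j)]; ring
      _ = #T * (|∑ i, β i| - σ) + 2 * ∑ j ∈ T, |β j| := by
          rw [sum_add_distrib, sum_const, nsmul_eq_mul, mul_sum]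
      _ ≤ 2 * |∑ i, β i| := by nlinarith

lemma sum_max_abs_sum_add_abs_sub_sum_erase_abs_le :
    ∑ j, max (|∑ i, β i| + |β j| - ∑ i ∈ univ.erase j, |β i|) 0 ≤ 2 * |∑ i, β i| := by
  calc _ = ∑ j with 0 ≤ |∑ i, β i| + |β j| - ∑ i ∈ univ.erase j, |β i|,
        (|∑ i, β i| + |β j| - ∑ i ∈ univ.erase j, |β i|) := by
        rw [sum_filter]
        exact sum_congr rfl fun j _ => by
          split_ifs with h
          exacts [max_eq_left h, max_eq_right (not_le.1 h).le]
    _ ≤ _ := sum_abs_sum_add_abs_sub_sum_erase_abs_le β _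

end

lemma sum_abs_sub_mul_sum_mul_eq {n : ℕ} (A : Matrix (Fin n) (Fin (n + 1)) ℝ)
    (hA : ∀ (i : Fin n) (j : Fin (n + 1)),
      A i j = if (j : ℕ) = 0 then 1 else if (j : ℕ) = (i : ℕ) + 1 then 1 else 0)
    (a : ℝ) (β : Fin n → ℝ) (j : Fin n) :
    ∑ c, |A j c - a * ∑ i, β i * A i c| =
      |1 - a * ∑ i, β i| + (|1 - a * β j| + |a| * ∑ i ∈ univ.erase j, |β i|) := by
  have hA0 : ∀ i, A i 0 = 1 := by simp [hA]
  have hAsucc : ∀ i k, A i k.succ = if k = i then 1 else 0 := by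
    simp [hA, Fin.ext_iff]
  simp only [Fin.sum_univ_succ, hA0, hAsucc, mul_one, mul_ite, mul_zero, Fintype.sum_ite_eq]
  congr 1
  rw [← add_sum_erase univ _ (mem_univ j), if_pos rfl, mul_sum]
  congr 1
  refine sum_congr rfl fun k hk => ?_
  rw [if_neg (ne_of_mem_erase hk), zero_sub, abs_neg, abs_mul]

lemma two_mul_sub_one_le_sum_abs_sub {n : ℕ} (A : Matrix (Fin n) (Fin (n + 1)) ℝ)
    (hA : ∀ (i : Fin n) (j : Fin (n + 1)),
      A i j = if (j : ℕ) = 0 then 1 else if (j : ℕ) = (i : ℕ) + 1 then 1 else 0)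
    (α β : Fin n → ℝ) :
    2 * ((n : ℝ) - 1) ≤ ∑ j, ∑ c, |A j c - α j * ∑ i, β i * A i c| := by
  set excess := fun j => max (|∑ i, β i| + |β j| - ∑ i ∈ univ.erase j, |β i|) 0
  have hrow (j : Fin n) : 2 - excess j / |∑ i, β i| ≤
      ∑ c, |A j c - α j * ∑ i, β i * A i c| := by
    rw [sum_abs_sub_mul_sum_mul_eq A hA, ← add_assoc]
    exact two_sub_max_div_abs_le _ _ _ _ (abs_sum_sub_le_sum_erase_abs β j)
  have hexcess : ∑ j, excess j / |∑ i, β i| ≤ 2 := by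
    rw [← sum_div]
    exact div_le_of_le_mul₀ (abs_nonneg _) zero_le_two
      (by linarith [sum_max_abs_sum_add_abs_sub_sum_erase_abs_le β])
  calc 2 * ((n : ℝ) - 1) ≤ ∑ j, (2 - excess j / |∑ i, β i|) := by
        rw [sum_sub_distrib, sum_const, card_univ, Fintype.card_fin, nsmul_eq_mul]
        linarith
    _ ≤ _ := sum_le_sum fun j _ => hrow j

theorem rank_one_in_row_span_hard_instance_general {d : ℕ}
    (A : Matrix (Fin (d - 1)) (Fin d) ℝ)
    (hA : ∀ (i : Fin (d - 1)) (j : Fin d),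
      A i j = if (j : ℕ) = 0 then 1 else if (j : ℕ) = (i : ℕ) + 1 then 1 else 0) :
    ∀ α β : Fin (d - 1) → ℝ,
      2 * ((d : ℝ) - 2) ≤
        ∑ j : Fin (d - 1), ∑ c : Fin d,
          |A j c - α j * (∑ i : Fin (d - 1), β i * A i c)| := by
  intro α β
  cases d with
  | zero => norm_num
  | succ n =>
    refine le_of_eq_of_le ?_ (two_mul_sub_one_le_sum_abs_sub A hA α β)
    push_cast
    ring

/-- Hard instance for rank-one approximation within the row span: let `A` be the `(d−1) × d`
matrix whose first column is all ones and whose remaining columns form an identity matrix. Then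
every rank-one matrix whose rows are multiples of a single vector in the row span of `A` has
entrywise `ℓ₁` distance at least `2(d − 2)` from `A`. -/
theorem rank_one_in_row_span_hard_instance {d : ℕ} (hd : 2 ≤ d)
    (A : Matrix (Fin (d - 1)) (Fin d) ℝ)
    (hA : ∀ (i : Fin (d - 1)) (j : Fin d),
      A i j = if (j : ℕ) = 0 then 1 else if (j : ℕ) = (i : ℕ) + 1 then 1 else 0) :
    ∀ α β : Fin (d - 1) → ℝ,
      2 * ((d : ℝ) - 2) ≤
        ∑ j : Fin (d - 1), ∑ c : Fin d,
          |A j c - α j * (∑ i : Fin (d - 1), β i * A i c)| :=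
  rank_one_in_row_span_hard_instance_general A hA
end

section
/- Let c₁, c₂, c₃ > 0 be real constants and let c₄ ≥ 10(c₁ + c₂ + c₃ + 1). Let n ≥ 2 and 1 ≤ k ≤ n be integers, let A be a real n×n matrix with |A_{i,j}| ≤ n^{c₁} for all i, j, and set B = n^{c₄}. Let Ã be the (n+k−1)×(n+k−1) block-diagonal matrix whose top-left n×n block is A, whose remaining k−1 diagonal entries all equal B, and all of whose other entries are 0. Let 1 ≤ C ≤ n^{c₃} and suppose Â is an (n+k−1)×(n+k−1) real matrix of rank at most k satisfying ‖Â − Ã‖₁ ≤ C·‖A' − Ã‖₁ for every (n+k−1)×(n+k−1) matrix A' of rank at most k. Then there exists j* ∈ {1, …, n} such that, with c ∈ ℝⁿ denoting the vector formed by the first n entries of column j* of Â, for all u, v ∈ ℝⁿ there exists w ∈ ℝⁿ with ‖c wᵀ − A‖₁ ≤ C·‖u vᵀ − A‖₁ + n^{−c₂}. -/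
/-!
Write `Ã = diag(A, B·I)` with `B = n^{c₄}`. Testing the optimality of `Â` against the rank-`k`
matrix `diag(u vᵀ, B·I)` gives `‖Â − Ã‖₁ ≤ C‖u vᵀ − A‖₁`, and with `u = v = 0` this is at most
`E = n^{c₁+c₃+2}`, so every entry of `Â` is within `E` of the corresponding entry of `Ã`. The last
`k − 1` columns of `Â` are then diagonally dominant, hence independent, and since `rank Â ≤ k` the
first `n` columns are, modulo their span, multiples `wⱼ` of one pivot column `j*` with `|wⱼ| ≤ 1`.
The coefficients of the correction in that span are `O(E/B)`, so on the top block it costs only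
`O(n³E²/B) ≤ n^{-c₂}`, while the top block of `Â` is within `‖Â − Ã‖₁ ≤ C‖u vᵀ − A‖₁` of `A`.
-/

open Matrix

open Finset Module Real

theorem exists_eq_smul_of_finrank_le_one {V : Type*} [AddCommGroup V] [Module ℝ V]
    [FiniteDimensional ℝ V] (hV : finrank ℝ V ≤ 1) {ι : Type*} [Fintype ι] [Nonempty ι]
    (x : ι → V) : ∃ j₀, ∀ j, ∃ α : ℝ, |α| ≤ 1 ∧ x j = α • x j₀ := by
  obtain ⟨v, hv⟩ := finrank_le_one_iff.mp hV
  choose c hc using fun j => hv (x j)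
  obtain ⟨j₀, -, hj₀⟩ := exists_max_image univ (fun j => |c j|) univ_nonempty
  refine ⟨j₀, fun j => ?_⟩
  by_cases hz : c j₀ = 0
  · have hcj : c j = 0 := by simpa [hz] using hj₀ j (mem_univ j)
    exact ⟨0, by simp, by rw [← hc j, hcj, zero_smul, zero_smul]⟩
  · refine ⟨c j / c j₀, ?_, ?_⟩
    · rw [abs_div, div_le_one (abs_pos.mpr hz)]
      exact hj₀ j (mem_univ j)
    · rw [← hc j, ← hc j₀, smul_smul, div_mul_cancel₀ _ hz]

theorem exists_sub_smul_mem_of_finrank_le {V : Type*} [AddCommGroup V] [Module ℝ V]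
    {S W : Submodule ℝ V} [FiniteDimensional ℝ W] (hSW : S ≤ W)
    (hWS : finrank ℝ W ≤ finrank ℝ S + 1) {ι : Type*} [Fintype ι] [Nonempty ι]
    (x : ι → V) (hx : ∀ j, x j ∈ W) :
    ∃ j₀, ∀ j, ∃ α : ℝ, |α| ≤ 1 ∧ x j - α • x j₀ ∈ S := by
  set S' := S.comap W.subtype
  have hS' : finrank ℝ S' = finrank ℝ S := (Submodule.comapSubtypeEquivOfLe hSW).finrank_eq
  have hquot : finrank ℝ (W ⧸ S') ≤ 1 := by
    have := S'.finrank_quotient_add_finrank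
    omega
  obtain ⟨j₀, hj₀⟩ := exists_eq_smul_of_finrank_le_one hquot fun j => S'.mkQ ⟨x j, hx j⟩
  refine ⟨j₀, fun j => ?_⟩
  obtain ⟨α, hα, hxj⟩ := hj₀ j
  refine ⟨α, hα, ?_⟩
  rw [← map_smul, ← sub_eq_zero, ← map_sub, Submodule.mkQ_apply,
    Submodule.Quotient.mk_eq_zero] at hxj
  exact hxj

theorem norm_mulVec_le_of_abs_le {m n : Type*} [Fintype m] [Fintype n] {X : Matrix m n ℝ}
    {E : ℝ} (hE : 0 ≤ E) (hX : ∀ i j, |X i j| ≤ E) (v : n → ℝ) :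
    ‖X *ᵥ v‖ ≤ Fintype.card n * E * ‖v‖ := by
  refine (pi_norm_le_iff_of_nonneg (by positivity)).mpr fun i => ?_
  calc ‖(X *ᵥ v) i‖ ≤ ∑ j, |X i j| * |v j| := by
        simpa only [Real.norm_eq_abs, mulVec, dotProduct, abs_mul] using
          abs_sum_le_sum_abs (fun j => X i j * v j) univ
    _ ≤ ∑ _j : n, E * ‖v‖ := by
        gcongr with j
        · exact hX i j
        · exact norm_le_pi_norm v j
    _ = Fintype.card n * E * ‖v‖ := by simp [mul_assoc]

theorem norm_le_norm_mulVec_of_abs_sub_smul_one_le {κ : Type*} [Fintype κ] [DecidableEq κ]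
    {H : Matrix κ κ ℝ} {B E : ℝ} (hE : 0 ≤ E) (hH : ∀ s t, |(H - B • 1) s t| ≤ E)
    (v : κ → ℝ) : (B - Fintype.card κ * E) * ‖v‖ ≤ ‖H *ᵥ v‖ := by
  have hBv : B * ‖v‖ ≤ ‖H *ᵥ v‖ + ‖(H - B • 1) *ᵥ v‖ :=
    calc B * ‖v‖ ≤ ‖B • v‖ := by
          rw [norm_smul, Real.norm_eq_abs]
          exact mul_le_mul_of_nonneg_right (le_abs_self B) (norm_nonneg v)
      _ = ‖H *ᵥ v - (H - B • 1) *ᵥ v‖ := by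
          rw [sub_mulVec, smul_mulVec, one_mulVec, sub_sub_cancel]
      _ ≤ _ := norm_sub_le _ _
  linarith [norm_mulVec_le_of_abs_le hE hH v]

theorem abs_le_sum_sum_abs {α β : Type*} [Fintype α] [Fintype β] (X : Matrix α β ℝ) (a : α)
    (b : β) : |X a b| ≤ ∑ a, ∑ b, |X a b| :=
  (single_le_sum (f := fun b => |X a b|) (fun _ _ => abs_nonneg _) (mem_univ b)).trans
    (single_le_sum (f := fun a => ∑ b, |X a b|) (fun _ _ => by positivity) (mem_univ a))

theorem sum_sum_abs_le_of_abs_le {α β : Type*} [Fintype α] [Fintype β] {X : Matrix α β ℝ}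
    {b : ℝ} (hX : ∀ i j, |X i j| ≤ b) :
    ∑ i, ∑ j, |X i j| ≤ Fintype.card α * (Fintype.card β * b) :=
  (sum_le_sum fun i _ => sum_le_sum fun j _ => hX i j).trans_eq (by simp)

theorem sum_sum_abs_inl_le {ι κ : Type*} [Fintype ι] [Fintype κ] (X : Matrix (ι ⊕ κ) (ι ⊕ κ) ℝ) :
    ∑ i, ∑ j, |X (.inl i) (.inl j)| ≤ ∑ a, ∑ b, |X a b| := by
  calc ∑ i, ∑ j, |X (.inl i) (.inl j)| ≤ ∑ i, ∑ b, |X (.inl i) b| := by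
        gcongr with i
        rw [Fintype.sum_sum_type]
        exact le_add_of_nonneg_right (by positivity)
    _ ≤ ∑ a, ∑ b, |X a b| := by
        rw [Fintype.sum_sum_type (fun a => ∑ b, |X a b|)]
        exact le_add_of_nonneg_right (by positivity)

theorem rank_fromBlocks_vecMulVec_le {R ι κ : Type*} [Field R] [Fintype ι] [Fintype κ]
    (u v : ι → R) (D : Matrix κ κ R) :
    (fromBlocks (vecMulVec u v) 0 0 D).rank ≤ 1 + Fintype.card κ := by
  classical
  have hfactor : fromBlocks (vecMulVec u v) 0 0 D =
      (fromBlocks (replicateCol Unit u) 0 0 D : Matrix (ι ⊕ κ) (Unit ⊕ κ) R) *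
        (fromBlocks (replicateRow Unit v) 0 0 1 : Matrix (Unit ⊕ κ) (ι ⊕ κ) R) := by
    rw [vecMulVec_eq Unit, fromBlocks_multiply]
    simp
  rw [hfactor]
  exact (rank_mul_le_left _ _).trans ((rank_le_card_width _).trans (by simp))

theorem sum_smul_col_inr {ι κ : Type*} [Fintype κ] (M : Matrix (ι ⊕ κ) (ι ⊕ κ) ℝ) (β : κ → ℝ) :
    ∑ t, β t • M.col (Sum.inr t) = M.submatrix id Sum.inr *ᵥ β := by
  ext a
  simp [Finset.sum_apply, mulVec, dotProduct, mul_comm]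

section Pivot

variable {ι κ : Type*} [Fintype κ] [DecidableEq κ] {M : Matrix (ι ⊕ κ) (ι ⊕ κ) ℝ} {B E : ℝ}

theorem linearIndependent_col_inr (hE : 0 ≤ E) (hB : Fintype.card κ * E < B)
    (h₂₂ : ∀ t t', |(M.submatrix Sum.inr Sum.inr - B • 1) t t'| ≤ E) :
    LinearIndependent ℝ fun t => M.col (Sum.inr t) := by
  refine Fintype.linearIndependent_iff.mpr fun β hβ => ?_
  rw [sum_smul_col_inr] at hβ
  have hHβ : M.submatrix Sum.inr Sum.inr *ᵥ β = 0 := funext fun t => congrFun hβ (.inr t)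
  have hβ0 : ‖β‖ ≤ 0 := by
    have := norm_le_norm_mulVec_of_abs_sub_smul_one_le hE h₂₂ β
    rw [hHβ, norm_zero] at this
    nlinarith [norm_nonneg β]
  exact congrFun (norm_le_zero_iff.mp hβ0)

theorem norm_le_of_mulVec_inr_eq_sub_smul (hE : 0 ≤ E) (hB : 2 * Fintype.card κ * E < B)
    (h₂₁ : ∀ t j, |M (.inr t) (.inl j)| ≤ E)
    (h₂₂ : ∀ t t', |(M.submatrix Sum.inr Sum.inr - B • 1) t t'| ≤ E) {j j₀ : ι} {α : ℝ}
    (hα : |α| ≤ 1) {β : κ → ℝ}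
    (hβ : M.submatrix id Sum.inr *ᵥ β = M.col (.inl j) - α • M.col (.inl j₀)) :
    ‖β‖ ≤ 4 * E / B := by
  have hHβ : ‖M.submatrix Sum.inr Sum.inr *ᵥ β‖ ≤ 2 * E := by
    refine (pi_norm_le_iff_of_nonneg (by positivity)).mpr fun t => ?_
    change |(M.submatrix id Sum.inr *ᵥ β) (.inr t)| ≤ 2 * E
    rw [hβ]
    calc |M (.inr t) (.inl j) - α * M (.inr t) (.inl j₀)|
        ≤ |M (.inr t) (.inl j)| + |α| * |M (.inr t) (.inl j₀)| := by
          rw [← abs_mul]; exact abs_sub _ _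
      _ ≤ E + 1 * E := by gcongr; exacts [h₂₁ t j, h₂₁ t j₀]
      _ = 2 * E := by ring
  have hKE : 0 ≤ Fintype.card κ * E := by positivity
  rw [le_div_iff₀ (by linarith)]
  nlinarith [norm_le_norm_mulVec_of_abs_sub_smul_one_le hE h₂₂ β, norm_nonneg β]

theorem exists_pivot_column_of_rank_le [Fintype ι] [Nonempty ι] (hE : 0 ≤ E)
    (hB : 2 * Fintype.card κ * E < B) (hrank : M.rank ≤ Fintype.card κ + 1)
    (h₁₂ : ∀ i t, |M (.inl i) (.inr t)| ≤ E) (h₂₁ : ∀ t j, |M (.inr t) (.inl j)| ≤ E)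
    (h₂₂ : ∀ t t', |(M.submatrix Sum.inr Sum.inr - B • 1) t t'| ≤ E) :
    ∃ j₀, ∀ j, ∃ α : ℝ, ∀ i,
      |M (.inl i) (.inl j) - α * M (.inl i) (.inl j₀)| ≤ 4 * Fintype.card κ * E ^ 2 / B := by
  have hindep := linearIndependent_col_inr hE
    (by linarith [mul_nonneg (Nat.cast_nonneg (α := ℝ) (Fintype.card κ)) hE]) h₂₂
  have hSW : Submodule.span ℝ (Set.range fun t => M.col (Sum.inr t)) ≤
      Submodule.span ℝ (Set.range M.col) :=
    Submodule.span_mono (Set.range_comp_subset_range _ _)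
  have hWS := rank_eq_finrank_span_cols M ▸ finrank_span_eq_card hindep ▸ hrank
  obtain ⟨j₀, hj₀⟩ := exists_sub_smul_mem_of_finrank_le hSW hWS (fun j => M.col (.inl j))
    fun j => Submodule.subset_span ⟨_, rfl⟩
  refine ⟨j₀, fun j => ?_⟩
  obtain ⟨α, hα, hmem⟩ := hj₀ j
  obtain ⟨β, hβ⟩ := (Submodule.mem_span_range_iff_exists_fun ℝ).mp hmem
  rw [sum_smul_col_inr] at hβ
  have hβ_norm := norm_le_of_mulVec_inr_eq_sub_smul hE hB h₂₁ h₂₂ hα hβ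
  refine ⟨α, fun i => ?_⟩
  calc |M (.inl i) (.inl j) - α * M (.inl i) (.inl j₀)|
      = ‖(M.submatrix Sum.inl Sum.inr *ᵥ β) i‖ := congrArg abs (congrFun hβ (.inl i)).symm
    _ ≤ ‖M.submatrix Sum.inl Sum.inr *ᵥ β‖ := norm_le_pi_norm _ i
    _ ≤ Fintype.card κ * E * ‖β‖ := norm_mulVec_le_of_abs_le hE h₁₂ β
    _ ≤ Fintype.card κ * E * (4 * E / B) := by gcongr
    _ = 4 * Fintype.card κ * E ^ 2 / B := by ring

theorem exists_pivot_rank_one_approx [Fintype ι] [Nonempty ι] (A : Matrix ι ι ℝ)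
    (hB : 2 * Fintype.card κ * E < B) (hrank : M.rank ≤ Fintype.card κ + 1)
    (hM : ∀ a b, |(M - fromBlocks A 0 0 (B • 1) : Matrix (ι ⊕ κ) (ι ⊕ κ) ℝ) a b| ≤ E) :
    ∃ j₀, ∃ w : ι → ℝ, ∑ i, ∑ j, |M (.inl i) (.inl j₀) * w j - A i j| ≤
      ∑ i, ∑ j, |M (.inl i) (.inl j) - A i j| +
        Fintype.card ι * (Fintype.card ι * (4 * Fintype.card κ * E ^ 2 / B)) := by
  obtain ⟨i₀⟩ := ‹Nonempty ι›
  have hE : 0 ≤ E := (abs_nonneg _).trans (hM (.inl i₀) (.inl i₀))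
  obtain ⟨j₀, hj₀⟩ := exists_pivot_column_of_rank_le hE hB hrank
    (fun i t => by simpa using hM (Sum.inl i) (Sum.inr t))
    (fun t j => by simpa using hM (Sum.inr t) (Sum.inl j))
    (fun t t' => by simpa using hM (Sum.inr t) (Sum.inr t'))
  choose w hw using hj₀
  refine ⟨j₀, w, ?_⟩
  calc ∑ i, ∑ j, |M (.inl i) (.inl j₀) * w j - A i j|
      ≤ ∑ i, ∑ j, (|M (.inl i) (.inl j) - A i j| + 4 * Fintype.card κ * E ^ 2 / B) := by
        gcongr with i _ j _
        calc |M (.inl i) (.inl j₀) * w j - A i j|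
            ≤ |M (.inl i) (.inl j) - A i j| +
                |M (.inl i) (.inl j) - w j * M (.inl i) (.inl j₀)| := by
              rw [mul_comm, add_comm, abs_sub_comm (M _ _)]; exact abs_sub_le _ _ _
          _ ≤ _ := by gcongr; exact hw j i
    _ = _ := by simp [sum_add_distrib]

end Pivot

theorem l1M_eq_sum_submatrix {m d : ℕ} {α β : Type*} [Fintype α] [Fintype β]
    (M : Matrix (Fin m) (Fin d) ℝ) (e : α ≃ Fin m) (f : β ≃ Fin d) :
    l1M M = ∑ a, ∑ b, |M.submatrix e f a b| := by
  simp only [l1M, submatrix_apply]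
  rw [← e.sum_comp]
  exact sum_congr rfl fun a _ => (f.sum_comp _).symm

theorem submatrix_finSumFinEquiv_eq_fromBlocks {R : Type*} [Semiring R] {n K N : ℕ}
    (h : n + K = N) {A : Matrix (Fin n) (Fin n) R} {b : R} {T : Matrix (Fin N) (Fin N) R}
    (htop : ∀ (i j : Fin N) (hi : (i : ℕ) < n) (hj : (j : ℕ) < n), T i j = A ⟨i, hi⟩ ⟨j, hj⟩)
    (hdiag : ∀ i : Fin N, n ≤ (i : ℕ) → T i i = b)
    (hzero : ∀ i j : Fin N, i ≠ j → (n ≤ (i : ℕ) ∨ n ≤ (j : ℕ)) → T i j = 0) :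
    T.submatrix (finSumFinEquiv.trans (finCongr h)) (finSumFinEquiv.trans (finCongr h)) =
      fromBlocks A 0 0 (b • 1) := by
  have hne : ∀ (i : Fin n) (t : Fin K),
      finCongr h (Fin.castAdd K i) ≠ finCongr h (Fin.natAdd n t) :=
    fun i t hit => by simp [Fin.ext_iff] at hit; omega
  ext (i | t) (j | t')
  · exact htop _ _ i.isLt j.isLt
  · exact hzero _ _ (hne i t') (Or.inr (by simp))
  · exact hzero _ _ (hne j t).symm (Or.inl (by simp))
  · by_cases htt : t = t'
    · subst htt
      simpa using hdiag _ (by simp)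
    · simpa [htt] using hzero _ _ (by simpa [Fin.ext_iff] using htt) (Or.inl (by simp))

theorem sum_abs_sub_fromBlocks_le_of_optimal {N : ℕ} {ι κ : Type*} [Fintype ι] [Fintype κ]
    [DecidableEq κ] (e : ι ⊕ κ ≃ Fin N) {A : Matrix ι ι ℝ} {b C : ℝ}
    {Ahat Atil : Matrix (Fin N) (Fin N) ℝ} (hT : Atil.submatrix e e = fromBlocks A 0 0 (b • 1))
    (happrox : ∀ A' : Matrix (Fin N) (Fin N) ℝ, A'.rank ≤ 1 + Fintype.card κ →
      l1M (Ahat - Atil) ≤ C * l1M (A' - Atil)) (u v : ι → ℝ) :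
    ∑ a, ∑ b', |(Ahat.submatrix e e - fromBlocks A 0 0 (b • 1) : Matrix (ι ⊕ κ) (ι ⊕ κ) ℝ) a b'| ≤
      C * ∑ i, ∑ j, |u i * v j - A i j| := by
  have hdist : ∀ A' : Matrix (ι ⊕ κ) (ι ⊕ κ) ℝ, l1M (A'.submatrix e.symm e.symm - Atil) =
      ∑ a, ∑ b', |(A' - fromBlocks A 0 0 (b • 1) : Matrix (ι ⊕ κ) (ι ⊕ κ) ℝ) a b'| := by
    intro A'
    rw [l1M_eq_sum_submatrix _ e e, ← hT]
    simp
  have := happrox ((fromBlocks (vecMulVec u v) 0 0 (b • 1)).submatrix e.symm e.symm)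
    ((rank_submatrix _ _ _).trans_le (rank_fromBlocks_vecMulVec_le _ _ _))
  rw [show Ahat = (Ahat.submatrix e e).submatrix e.symm e.symm by simp, hdist, hdist] at this
  simpa [Fintype.sum_sum_type, vecMulVec_apply] using this

theorem mul_sum_sum_abs_le_rpow {n : ℕ} (hn : 0 < n) {A : Matrix (Fin n) (Fin n) ℝ}
    {C c₁ c₃ : ℝ} (hA : ∀ i j, |A i j| ≤ (n : ℝ) ^ c₁) (hC : C ≤ (n : ℝ) ^ c₃) :
    C * ∑ i, ∑ j, |A i j| ≤ (n : ℝ) ^ (c₁ + c₃ + 2) := by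
  have hsum := sum_sum_abs_le_of_abs_le hA
  simp only [Fintype.card_fin] at hsum
  calc C * ∑ i, ∑ j, |A i j| ≤ (n : ℝ) ^ c₃ * (n * (n * n ^ c₁)) :=
        mul_le_mul hC hsum (by positivity) (by positivity)
    _ = (n : ℝ) ^ (c₁ + c₃ + 2) := by
        rw [rpow_add (by positivity), rpow_add (by positivity), rpow_two]; ring

theorem two_mul_mul_rpow_lt_rpow {x K a c : ℝ} (hx : 2 ≤ x) (hK : K ≤ x) (hac : a + 2 < c) :
    2 * K * x ^ a < x ^ c := by
  have hx0 : 0 < x := by linarith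
  calc 2 * K * x ^ a ≤ x ^ (2 : ℝ) * x ^ a := by
        gcongr
        rw [rpow_two]; nlinarith
    _ = x ^ (a + 2) := by rw [← rpow_add hx0, add_comm]
    _ < x ^ c := rpow_lt_rpow_of_exponent_lt (by linarith) hac

theorem mul_mul_div_rpow_le_rpow {x K a c d : ℝ} (hx : 2 ≤ x) (hK : K ≤ x)
    (hacd : 2 * a + 5 + d ≤ c) : x * (x * (4 * K * (x ^ a) ^ 2 / x ^ c)) ≤ x ^ (-d) := by
  have hx0 : 0 < x := by linarith
  have h4K : x * x * (4 * K) ≤ x ^ (5 : ℝ) := by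
    rw [show (5 : ℝ) = (5 : ℕ) by norm_num, rpow_natCast]
    have : 4 ≤ x * x := by nlinarith
    have : 4 * K ≤ x * x * x := by nlinarith
    nlinarith [mul_pos hx0 hx0]
  calc x * (x * (4 * K * (x ^ a) ^ 2 / x ^ c)) = x * x * (4 * K) * x ^ (2 * a - c) := by
        rw [rpow_sub hx0, mul_comm 2 a, rpow_mul hx0.le, rpow_two]; ring
    _ ≤ x ^ (5 : ℝ) * x ^ (2 * a - c) := by gcongr
    _ = x ^ (2 * a + 5 - c) := by rw [← rpow_add hx0]; ring_nf
    _ ≤ x ^ (-d) := rpow_le_rpow_of_exponent_le (by linarith) (by linarith)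

/-- Reducing the rank-`k` case to the rank-`1` case: if `Ã` is the block diagonal matrix with
top-left `n × n` block `A` (entries bounded by `n^{c₁}`) and `k − 1` additional diagonal entries
equal to `B = n^{c₄}`, and `Â` is a rank-`k` `C`-approximation to `Ã` in entrywise `ℓ₁` norm,
then the first `n` entries of some column `j*` of `Â` give a rank-`1` `C`-approximation to `A`
up to additive error `n^{−c₂}`. -/
theorem rank_k_to_rank_one_reduction (c₁ c₂ c₃ c₄ : ℝ)
    (hc₁ : 0 < c₁) (hc₂ : 0 < c₂) (hc₃ : 0 < c₃)
    (hc₄ : 10 * (c₁ + c₂ + c₃ + 1) ≤ c₄)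
    (n k : ℕ) (hn : 2 ≤ n) (hk1 : 1 ≤ k) (hkn : k ≤ n)
    (A : Matrix (Fin n) (Fin n) ℝ)
    (hA : ∀ i j, |A i j| ≤ (n : ℝ) ^ c₁)
    (Atil : Matrix (Fin (n + k - 1)) (Fin (n + k - 1)) ℝ)
    (hblock_top : ∀ (i j : Fin (n + k - 1)) (hi : (i : ℕ) < n) (hj : (j : ℕ) < n),
      Atil i j = A ⟨i, hi⟩ ⟨j, hj⟩)
    (hblock_diag : ∀ i : Fin (n + k - 1), n ≤ (i : ℕ) → Atil i i = (n : ℝ) ^ c₄)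
    (hblock_zero : ∀ i j : Fin (n + k - 1), i ≠ j → (n ≤ (i : ℕ) ∨ n ≤ (j : ℕ)) →
      Atil i j = 0)
    (C : ℝ) (hC2 : C ≤ (n : ℝ) ^ c₃)
    (Ahat : Matrix (Fin (n + k - 1)) (Fin (n + k - 1)) ℝ)
    (hrank : Ahat.rank ≤ k)
    (happrox : ∀ A' : Matrix (Fin (n + k - 1)) (Fin (n + k - 1)) ℝ, A'.rank ≤ k →
      l1M (Ahat - Atil) ≤ C * l1M (A' - Atil)) :
    ∃ jstar : Fin n, ∀ u v : Fin n → ℝ, ∃ w : Fin n → ℝ,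
      (∑ i : Fin n, ∑ j : Fin n,
          |Ahat (Fin.castLE (by omega) i) (Fin.castLE (by omega) jstar) * w j - A i j|) ≤
        C * (∑ i : Fin n, ∑ j : Fin n, |u i * v j - A i j|) + (n : ℝ) ^ (-c₂) := by
  have hNK : n + (k - 1) = n + k - 1 := by omega
  have hx : (2 : ℝ) ≤ n := by exact_mod_cast hn
  have hK : ((k - 1 : ℕ) : ℝ) ≤ n := by exact_mod_cast (by omega : k - 1 ≤ n)
  have : NeZero n := ⟨by omega⟩
  set e := finSumFinEquiv.trans (finCongr hNK)
  have hopt := sum_abs_sub_fromBlocks_le_of_optimal e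
    (submatrix_finSumFinEquiv_eq_fromBlocks hNK hblock_top hblock_diag hblock_zero)
    (fun A' h => happrox A' (h.trans (by simp; omega)))
  have hε := (hopt 0 0).trans (by simpa using mul_sum_sum_abs_le_rpow (by omega) hA hC2)
  obtain ⟨j₀, w, hw⟩ := exists_pivot_rank_one_approx A (M := Ahat.submatrix e e)
    (by simpa using two_mul_mul_rpow_lt_rpow hx hK (by linarith))
    (by simpa [rank_submatrix] using hrank.trans (by omega))
    (fun a b => (abs_le_sum_sum_abs _ a b).trans hε)
  refine ⟨j₀, fun u v => ⟨w, ?_⟩⟩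
  simp only [Fintype.card_fin] at hw
  -- `finSumFinEquiv (Sum.inl i)` and `Fin.castLE _ i` agree definitionally
  calc _ ≤ _ := hw
    _ ≤ _ := add_le_add ((sum_sum_abs_inl_le _).trans (hopt u v))
      (mul_mul_div_rpow_le_rpow hx hK (by linarith))
end

section
/- Let 1 < p < 2, let A be a real n×d matrix, U a real n×k matrix, S a real m×n matrix, and c₁ ≥ 0, c₂ > 0 real numbers. Let V* be a real k×d matrix with ‖UV* − A‖_p^p ≤ ‖UV − A‖_p^p for all k×d matrices V. Suppose ‖S(UV* − A)‖_p^p ≤ c₁ · ‖UV* − A‖_p^p and ‖SUx‖_p^p ≥ (1/c₂) · ‖Ux‖_p^p for all x ∈ ℝᵏ. Then for every k×d matrix V, ‖SUV − SA‖_p^p ≥ 2^{2−2p}·(1/c₂)·‖UV − A‖_p^p − (c₁ + 2^{1−p}·(1/c₂))·‖UV* − A‖_p^p. -/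
open Matrix

/-- The `p`-th power of the entrywise `ℓ_p` norm of a matrix: `∑ i j, |M i j| ^ p`. -/
noncomputable def lppM {n d : ℕ} (p : ℝ) (M : Matrix (Fin n) (Fin d) ℝ) : ℝ :=
  ∑ i, ∑ j, |M i j| ^ p

/-- The `p`-th power of the `ℓ_p` norm of a vector: `∑ i, |v i| ^ p`. -/
noncomputable def lppV {n : ℕ} (p : ℝ) (v : Fin n → ℝ) : ℝ :=
  ∑ i, |v i| ^ p

/-!
Split `SUV − SA = SU(V − V*) + S(UV* − A)` and `UV − A = U(V − V*) + (UV* − A)`. Convexity of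
`t ↦ t^p` gives `|a + b|^p ≤ 2^{p−1}(|a|^p + |b|^p)`, i.e. a reverse triangle inequality with
constant `2^{1−p}` for `‖·‖_p^p`, which is applied to both splittings. The contraction bound for `S`,
applied column by column to `V − V*`, links `‖SU(V − V*)‖_p^p` to `‖U(V − V*)‖_p^p`, and the
dilation bound controls `‖S(UV* − A)‖_p^p`.
-/

theorem abs_add_rpow_le {p : ℝ} (hp : 1 ≤ p) (a b : ℝ) :
    |a + b| ^ p ≤ 2 ^ (p - 1) * (|a| ^ p + |b| ^ p) :=
  calc |a + b| ^ p ≤ (|a| + |b|) ^ p :=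
        Real.rpow_le_rpow (abs_nonneg _) (abs_add_le a b) (by linarith)
    _ ≤ 2 ^ (p - 1) * (|a| ^ p + |b| ^ p) := by
        exact_mod_cast NNReal.rpow_add_le_mul_rpow_add_rpow ⟨|a|, abs_nonneg a⟩ ⟨|b|, abs_nonneg b⟩ hp

theorem lppM_add_le {n d : ℕ} {p : ℝ} (hp : 1 ≤ p) (X Y : Matrix (Fin n) (Fin d) ℝ) :
    lppM p (X + Y) ≤ 2 ^ (p - 1) * (lppM p X + lppM p Y) := by
  simp only [lppM, ← Finset.sum_add_distrib, Finset.mul_sum]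
  exact Finset.sum_le_sum fun i _ ↦ Finset.sum_le_sum fun j _ ↦ abs_add_rpow_le hp (X i j) (Y i j)

theorem lppM_neg {n d : ℕ} (p : ℝ) (X : Matrix (Fin n) (Fin d) ℝ) :
    lppM p (-X) = lppM p X := by
  simp only [lppM, Matrix.neg_apply, abs_neg]

theorem two_rpow_mul_lppM_sub_lppM_le_lppM_add {n d : ℕ} {p : ℝ} (hp : 1 ≤ p)
    (X Y : Matrix (Fin n) (Fin d) ℝ) :
    2 ^ (1 - p) * lppM p X - lppM p Y ≤ lppM p (X + Y) := by
  have h := lppM_add_le hp (X + Y) (-Y)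
  rw [add_neg_cancel_right, lppM_neg] at h
  have hinv : (2 : ℝ) ^ (1 - p) * 2 ^ (p - 1) = 1 := by
    rw [← Real.rpow_add two_pos]; norm_num
  have := mul_le_mul_of_nonneg_left h (by positivity : (0 : ℝ) ≤ 2 ^ (1 - p))
  rw [← mul_assoc, hinv, one_mul] at this
  linarith

theorem lppM_eq_sum_lppV_transpose {n d : ℕ} (p : ℝ) (M : Matrix (Fin n) (Fin d) ℝ) :
    lppM p M = ∑ j, lppV p (Mᵀ j) :=
  Finset.sum_comm

theorem Matrix.transpose_mul_apply {l m o α : Type*} [Fintype m] [NonUnitalNonAssocSemiring α]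
    (T : Matrix l m α) (N : Matrix m o α) (j : o) : (T * N)ᵀ j = T *ᵥ Nᵀ j :=
  rfl

theorem mul_lppM_le_lppM_mul_of_forall_mulVec {n k m d : ℕ} {p c : ℝ}
    {U : Matrix (Fin n) (Fin k) ℝ} {S : Matrix (Fin m) (Fin n) ℝ}
    (h : ∀ x : Fin k → ℝ, c * lppV p (U *ᵥ x) ≤ lppV p (S *ᵥ (U *ᵥ x)))
    (M : Matrix (Fin k) (Fin d) ℝ) :
    c * lppM p (U * M) ≤ lppM p (S * (U * M)) := by
  rw [lppM_eq_sum_lppV_transpose, lppM_eq_sum_lppV_transpose, Finset.mul_sum]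
  refine Finset.sum_le_sum fun j _ ↦ ?_
  rw [transpose_mul_apply, transpose_mul_apply]
  exact h _

theorem lp_no_dilation_no_contraction_imply_general_no_contraction_general {n d k m : ℕ}
    (p : ℝ) (hp1 : 1 < p)
    (A : Matrix (Fin n) (Fin d) ℝ) (U : Matrix (Fin n) (Fin k) ℝ)
    (S : Matrix (Fin m) (Fin n) ℝ)
    (c₁ c₂ : ℝ) (hc₂ : 0 < c₂)
    (Vstar : Matrix (Fin k) (Fin d) ℝ)
    (hdil : lppM p (S * (U * Vstar - A)) ≤ c₁ * lppM p (U * Vstar - A))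
    (hcon : ∀ x : Fin k → ℝ,
      (1 / c₂) * lppV p (U.mulVec x) ≤ lppV p (S.mulVec (U.mulVec x))) :
    ∀ V : Matrix (Fin k) (Fin d) ℝ,
      (2 : ℝ) ^ (2 - 2 * p) * (1 / c₂) * lppM p (U * V - A) -
          (c₁ + (2 : ℝ) ^ (1 - p) * (1 / c₂)) * lppM p (U * Vstar - A) ≤
        lppM p (S * U * V - S * A) := by
  intro V
  have hU : 2 ^ (1 - p) * lppM p (U * V - A) - lppM p (U * Vstar - A) ≤
      lppM p (U * (V - Vstar)) := by
    have h := two_rpow_mul_lppM_sub_lppM_le_lppM_add hp1.le (U * V - A) (-(U * Vstar - A))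
    rwa [lppM_neg, ← sub_eq_add_neg, sub_sub_sub_cancel_right, ← Matrix.mul_sub] at h
  have hSU : 2 ^ (1 - p) * lppM p (S * (U * (V - Vstar))) - lppM p (S * (U * Vstar - A)) ≤
      lppM p (S * U * V - S * A) := by
    have h := two_rpow_mul_lppM_sub_lppM_le_lppM_add hp1.le (S * (U * (V - Vstar)))
      (S * (U * Vstar - A))
    rwa [show S * (U * (V - Vstar)) + S * (U * Vstar - A) = S * U * V - S * A by
      simp only [Matrix.mul_sub, Matrix.mul_assoc]; abel] at h
  have hcon' := mul_lppM_le_lppM_mul_of_forall_mulVec hcon (V - Vstar)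
  have hsq : (2 : ℝ) ^ (2 - 2 * p) = 2 ^ (1 - p) * 2 ^ (1 - p) := by
    rw [← Real.rpow_add two_pos]; ring_nf
  have h2 : (0 : ℝ) ≤ 2 ^ (1 - p) := by positivity
  have hc : (0 : ℝ) ≤ 1 / c₂ := by positivity
  rw [hsq]
  nlinarith [mul_le_mul_of_nonneg_left hU hc, mul_le_mul_of_nonneg_left hcon' h2]

/-- `ℓ_p` version of the general contraction bound: if `S` has at most `c₁`-dilation on
`UV* − A` and at most `c₂`-contraction on `U` (in `‖·‖_p^p`), then for all `V`,
`‖SUV − SA‖_p^p ≥ 2^{2−2p}(1/c₂)‖UV − A‖_p^p − (c₁ + 2^{1−p}(1/c₂))‖UV* − A‖_p^p`. -/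
theorem lp_no_dilation_no_contraction_imply_general_no_contraction {n d k m : ℕ}
    (p : ℝ) (hp1 : 1 < p) (hp2 : p < 2)
    (A : Matrix (Fin n) (Fin d) ℝ) (U : Matrix (Fin n) (Fin k) ℝ)
    (S : Matrix (Fin m) (Fin n) ℝ)
    (c₁ c₂ : ℝ) (hc₁ : 0 ≤ c₁) (hc₂ : 0 < c₂)
    (Vstar : Matrix (Fin k) (Fin d) ℝ)
    (hVstar : ∀ V : Matrix (Fin k) (Fin d) ℝ,
      lppM p (U * Vstar - A) ≤ lppM p (U * V - A))
    (hdil : lppM p (S * (U * Vstar - A)) ≤ c₁ * lppM p (U * Vstar - A))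
    (hcon : ∀ x : Fin k → ℝ,
      (1 / c₂) * lppV p (U.mulVec x) ≤ lppV p (S.mulVec (U.mulVec x))) :
    ∀ V : Matrix (Fin k) (Fin d) ℝ,
      (2 : ℝ) ^ (2 - 2 * p) * (1 / c₂) * lppM p (U * V - A) -
          (c₁ + (2 : ℝ) ^ (1 - p) * (1 / c₂)) * lppM p (U * Vstar - A) ≤
        lppM p (S * U * V - S * A) :=
  lp_no_dilation_no_contraction_imply_general_no_contraction_general p hp1 A U S c₁ c₂ hc₂ Vstar
    hdil hcon
end

section
/- Let 1 < p < 2, let A be a real n×d matrix, U a real n×k matrix, S a real m×n matrix, and c₁ ≥ 0, c₂ > 0, c ≥ 1 real numbers. Let V* be a real k×d matrix with ‖UV* − A‖_p^p ≤ ‖UV − A‖_p^p for all k×d matrices V. Suppose ‖S(UV* − A)‖_p^p ≤ c₁ · ‖UV* − A‖_p^p and ‖SUx‖_p^p ≥ (1/c₂) · ‖Ux‖_p^p for all x ∈ ℝᵏ. Then any k×d matrix V̂ satisfying ‖SUV̂ − SA‖_p^p ≤ c · ‖SUV − SA‖_p^p for all k×d matrices V also satisfies ‖UV̂ − A‖_p^p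 ≤ c · 2^{p−1}·(2c₁c₂ + 1) · ‖UV* − A‖_p^p. -/
open Matrix

lemma aux_lppM_nonneg {n d : ℕ} (p : ℝ) (M : Matrix (Fin n) (Fin d) ℝ) :
    0 ≤ lppM p M :=
  Finset.sum_nonneg fun _ _ => Finset.sum_nonneg fun _ _ =>
    Real.rpow_nonneg (abs_nonneg _) p

/-- Subadditivity of `x ↦ x ^ q` for `0 ≤ q ≤ 1` on nonnegative reals. -/
lemma aux_rpow_subadd {q : ℝ} (h0 : 0 ≤ q) (h1 : q ≤ 1) {a b : ℝ}
    (ha : 0 ≤ a) (hb : 0 ≤ b) : (a + b) ^ q ≤ a ^ q + b ^ q := by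
  lift a to NNReal using ha
  lift b to NNReal using hb
  exact_mod_cast NNReal.rpow_add_le_add_rpow a b h0 h1

/-- `|x+y|^p ≤ 2^(p-1) (|x|^p + |y|^p)` for `1 ≤ p`. -/
lemma aux_rpow_add_le {p : ℝ} (hp : 1 ≤ p) (x y : ℝ) :
    |x + y| ^ p ≤ 2 ^ (p - 1) * (|x| ^ p + |y| ^ p) := by
  have h1 : |x + y| ^ p ≤ (|x| + |y|) ^ p :=
    Real.rpow_le_rpow (abs_nonneg _) (abs_add_le x y) (by linarith)
  refine h1.trans ?_
  have := NNReal.rpow_add_le_mul_rpow_add_rpow ‖x‖₊ ‖y‖₊ hp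
  have hcast : ((‖x‖₊ + ‖y‖₊ : NNReal) : ℝ) = |x| + |y| := by
    push_cast
    simp [Real.norm_eq_abs]
  calc (|x| + |y|) ^ p = (((‖x‖₊ + ‖y‖₊ : NNReal) : ℝ)) ^ p := by rw [hcast]
    _ = (((‖x‖₊ + ‖y‖₊) ^ p : NNReal) : ℝ) := by rw [NNReal.coe_rpow]
    _ ≤ (((2 : NNReal) ^ (p - 1) * (‖x‖₊ ^ p + ‖y‖₊ ^ p) : NNReal) : ℝ) := by
        exact_mod_cast this
    _ = 2 ^ (p - 1) * (|x| ^ p + |y| ^ p) := by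
        push_cast [NNReal.coe_rpow]
        simp [Real.norm_eq_abs]

/-- Core of the weak Clarkson inequality: `(x+y)^p + (x-y)^p ≤ 2 (x^p + y^p)`
for `0 ≤ y ≤ x` and `1 ≤ p ≤ 2`. -/
lemma aux_clarkson_core {p : ℝ} (hp1 : 1 ≤ p) (hp2 : p ≤ 2) {x y : ℝ}
    (hy : 0 ≤ y) (hxy : y ≤ x) :
    (x + y) ^ p + (x - y) ^ p ≤ 2 * (x ^ p + y ^ p) := by
  have hx : 0 ≤ x := hy.trans hxy
  have hp0 : (0 : ℝ) < p := by linarith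
  rcases eq_or_lt_of_le hx with hx0 | hx0
  · -- x = 0 hence y = 0
    have hyx : y = 0 := le_antisymm (hxy.trans hx0.symm.le) hy
    rw [← hx0, hyx]
    simp [Real.zero_rpow hp0.ne']
  -- main case 0 < x
  set g : ℝ → ℝ := fun t => 2 * x ^ p + 2 * t ^ p - ((x + t) ^ p + (x - t) ^ p) with hg
  have hderiv : ∀ t ∈ Set.Ioo (0 : ℝ) x,
      HasDerivAt g (2 * (p * t ^ (p - 1)) -
        (p * (x + t) ^ (p - 1) * 1 + p * (x - t) ^ (p - 1) * (-1))) t := by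
    intro t ht
    have h1 : HasDerivAt (fun t : ℝ => t ^ p) (p * t ^ (p - 1)) t :=
      Real.hasDerivAt_rpow_const (Or.inl ht.1.ne')
    have h2 : HasDerivAt (fun t : ℝ => (x + t) ^ p) (p * (x + t) ^ (p - 1) * 1) t := by
      have hbase : HasDerivAt (fun t : ℝ => x + t) 1 t := (hasDerivAt_id t).const_add x
      exact (Real.hasDerivAt_rpow_const (Or.inl (by nlinarith [ht.1, hx0] : (0:ℝ) < x + t).ne')).comp t hbase
    have h3 : HasDerivAt (fun t : ℝ => (x - t) ^ p) (p * (x - t) ^ (p - 1) * (-1)) t := by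
      have hbase : HasDerivAt (fun t : ℝ => x - t) (-1) t := (hasDerivAt_id t).const_sub x
      have hpos : (0:ℝ) < x - t := by simpa [sub_pos] using ht.2
      exact (Real.hasDerivAt_rpow_const (Or.inl hpos.ne')).comp t hbase
    exact ((h1.const_mul 2).const_add (2 * x ^ p)).sub (h2.add h3)
  have hcont : ContinuousOn g (Set.Icc 0 x) := by
    have hrc : Continuous fun t : ℝ => t ^ p := Real.continuous_rpow_const hp0.le
    exact (Continuous.sub (continuous_const.add (continuous_const.mul hrc))
      ((hrc.comp (continuous_const.add continuous_id)).add
        (hrc.comp (continuous_const.sub continuous_id)))).continuousOn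
  have hmono : MonotoneOn g (Set.Icc 0 x) := by
    apply monotoneOn_of_deriv_nonneg (convex_Icc 0 x) hcont
    · intro t ht
      rw [interior_Icc] at ht
      exact ((hderiv t ht).differentiableAt).differentiableWithinAt
    · intro t ht
      rw [interior_Icc] at ht
      rw [(hderiv t ht).deriv]
      have hq0 : (0:ℝ) ≤ p - 1 := by linarith
      have hq1 : p - 1 ≤ 1 := by linarith
      have ht0 : (0:ℝ) ≤ t := ht.1.le
      have htx : (0:ℝ) ≤ x - t := by linarith [ht.2]
      have key1 : (x + t) ^ (p - 1) ≤ x ^ (p - 1) + t ^ (p - 1) :=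
        aux_rpow_subadd hq0 hq1 hx ht0
      have key2 : x ^ (p - 1) ≤ t ^ (p - 1) + (x - t) ^ (p - 1) := by
        have hxe : x = t + (x - t) := by ring
        calc x ^ (p - 1) = (t + (x - t)) ^ (p - 1) := by rw [← hxe]
          _ ≤ t ^ (p - 1) + (x - t) ^ (p - 1) := aux_rpow_subadd hq0 hq1 ht0 htx
      have kk : (x + t) ^ (p - 1) ≤ 2 * t ^ (p - 1) + (x - t) ^ (p - 1) := by linarith
      have hmul := mul_le_mul_of_nonneg_left kk hp0.le
      nlinarith [hmul]
  have h0mem : (0 : ℝ) ∈ Set.Icc (0 : ℝ) x := ⟨le_refl 0, hx⟩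
  have hymem : y ∈ Set.Icc (0 : ℝ) x := ⟨hy, hxy⟩
  have hgy := hmono h0mem hymem hy
  have hg0 : g 0 = 0 := by
    simp [hg, Real.zero_rpow hp0.ne']
    ring
  rw [hg0] at hgy
  simp only [hg] at hgy
  linarith

/-- Half-form of the weak Clarkson inequality, for nonnegative reals. -/
lemma aux_clarkson_half {p : ℝ} (hp1 : 1 ≤ p) (hp2 : p ≤ 2) {u v : ℝ}
    (hu : 0 ≤ u) (hv : 0 ≤ v) :
    (u + v) ^ p + |u - v| ^ p ≤ 2 * (u ^ p + v ^ p) := by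
  rcases le_total v u with h | h
  · rw [abs_of_nonneg (sub_nonneg.2 h)]
    exact aux_clarkson_core hp1 hp2 hv h
  · rw [abs_sub_comm, abs_of_nonneg (sub_nonneg.2 h), add_comm u v]
    have := aux_clarkson_core hp1 hp2 hu h
    linarith

/-- Weak Clarkson inequality: `|x+y|^p + |x-y|^p ≤ 2 (|x|^p + |y|^p)` for `1 ≤ p ≤ 2`. -/
lemma aux_clarkson {p : ℝ} (hp1 : 1 ≤ p) (hp2 : p ≤ 2) (x y : ℝ) :
    |x + y| ^ p + |x - y| ^ p ≤ 2 * (|x| ^ p + |y| ^ p) := by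
  rcases le_total 0 x with hx | hx <;> rcases le_total 0 y with hy | hy
  · -- x ≥ 0, y ≥ 0
    rw [abs_of_nonneg hx, abs_of_nonneg hy, abs_of_nonneg (add_nonneg hx hy)]
    exact aux_clarkson_half hp1 hp2 hx hy
  · -- x ≥ 0, y ≤ 0
    rw [abs_of_nonneg hx, abs_of_nonpos hy]
    have h := aux_clarkson_half hp1 hp2 hx (neg_nonneg.2 hy)
    have e1 : x + -y = x - y := by ring
    have e2 : |x - -y| = |x + y| := by rw [sub_neg_eq_add]
    rw [e1, e2] at h
    have e3 : |x - y| = x - y := abs_of_nonneg (by linarith)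
    rw [e3]
    linarith
  · -- x ≤ 0, y ≥ 0
    rw [abs_of_nonpos hx, abs_of_nonneg hy]
    have h := aux_clarkson_half hp1 hp2 (neg_nonneg.2 hx) hy
    have e1 : |(-x) - y| = |x + y| := by rw [← abs_neg]; ring_nf
    rw [e1] at h
    have e2 : |x - y| = -x + y := by
      rw [abs_of_nonpos (by linarith)]; ring
    rw [e2]
    linarith
  · -- x ≤ 0, y ≤ 0
    rw [abs_of_nonpos hx, abs_of_nonpos hy]
    have h := aux_clarkson_half hp1 hp2 (neg_nonneg.2 hx) (neg_nonneg.2 hy)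
    have e1 : (-x) + -y = -(x + y) := by ring
    have e2 : |(-x) - -y| = |x - y| := by rw [← abs_neg]; ring_nf
    rw [e1, e2] at h
    rw [abs_of_nonpos (by linarith : x + y ≤ 0)]
    linarith

lemma aux_arith {c W aX β mM twop : ℝ} (hc : 1 ≤ c) (hmM : 0 ≤ mM)
    (h2 : 2 ≤ twop) (hWs : W + twop * mM ≤ 2 * (aX + β))
    (h1 : aX ≤ c * β) (h2' : aX ≤ c * mM) : W ≤ 2 * c * β := by
  have hc0 : (0:ℝ) < c := lt_of_lt_of_le one_pos hc
  have hm : 2 * mM ≤ twop * mM := mul_le_mul_of_nonneg_right h2 hmM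
  have w1 : W ≤ 2 * aX + 2 * β - 2 * mM := by linarith
  have w2 : c * W ≤ c * (2 * aX + 2 * β - 2 * mM) :=
    mul_le_mul_of_nonneg_left w1 hc0.le
  have w4 : (c - 1) * aX ≤ (c - 1) * (c * β) :=
    mul_le_mul_of_nonneg_left h1 (by linarith)
  have w5 : c * W ≤ c * (2 * c * β) := by nlinarith [w2, w4, h2']
  exact le_of_mul_le_mul_left w5 hc0

/-- `ℓ_p` version of the multiple-regression-cost preserving sketch: a sketch `S` with at most
`c₁`-dilation on `UV* − A` and at most `c₂`-contraction on `U` provides a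
`2^{p−1}(2c₁c₂ + 1)`-multiple-regression-cost preserving sketch. -/
theorem lp_multiple_regression_cost_preserving_sketch {n d k m : ℕ}
    (p : ℝ) (hp1 : 1 < p) (hp2 : p < 2)
    (A : Matrix (Fin n) (Fin d) ℝ) (U : Matrix (Fin n) (Fin k) ℝ)
    (S : Matrix (Fin m) (Fin n) ℝ)
    (c₁ c₂ c : ℝ) (hc₁ : 0 ≤ c₁) (hc₂ : 0 < c₂) (hc : 1 ≤ c)
    (Vstar : Matrix (Fin k) (Fin d) ℝ)
    (hVstar : ∀ V : Matrix (Fin k) (Fin d) ℝ,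
      lppM p (U * Vstar - A) ≤ lppM p (U * V - A))
    (hdil : lppM p (S * (U * Vstar - A)) ≤ c₁ * lppM p (U * Vstar - A))
    (hcon : ∀ x : Fin k → ℝ,
      (1 / c₂) * lppV p (U.mulVec x) ≤ lppV p (S.mulVec (U.mulVec x)))
    (Vhat : Matrix (Fin k) (Fin d) ℝ)
    (hVhat : ∀ V : Matrix (Fin k) (Fin d) ℝ,
      lppM p (S * U * Vhat - S * A) ≤ c * lppM p (S * U * V - S * A)) :
    lppM p (U * Vhat - A) ≤
      c * (2 : ℝ) ^ (p - 1) * (2 * c₁ * c₂ + 1) * lppM p (U * Vstar - A) := by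
  have hp1' : (1:ℝ) ≤ p := hp1.le
  have hp2' : p ≤ 2 := hp2.le
  have hc0 : (0:ℝ) < c := lt_of_lt_of_le one_pos hc
  set D := lppM p (U * Vstar - A) with hD
  set X := S * U * Vhat - S * A with hX
  set Y := S * U * Vstar - S * A with hY
  set Vmid := (2⁻¹ : ℝ) • (Vhat + Vstar) with hVmid
  set Mm := S * U * Vmid - S * A with hMm
  -- basic nonnegativity
  have hD0 : 0 ≤ D := aux_lppM_nonneg p _
  have haX0 : 0 ≤ lppM p X := aux_lppM_nonneg p _
  have hβ0 : 0 ≤ lppM p Y := aux_lppM_nonneg p _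
  have hmM0 : 0 ≤ lppM p Mm := aux_lppM_nonneg p _
  -- dilation bound
  have hβ : lppM p Y ≤ c₁ * D := by
    have hYe : S * (U * Vstar - A) = Y := by
      rw [Matrix.mul_sub, ← Matrix.mul_assoc]
    rw [← hYe]
    exact hdil
  -- near-optimality of Vhat in the sketched space
  have ha1 : lppM p X ≤ c * lppM p Y := hVhat Vstar
  have ha2 : lppM p X ≤ c * lppM p Mm := hVhat Vmid
  -- entrywise identities
  have hMid_entry : ∀ i j, Mm i j = (X i j + Y i j) / 2 := by
    intro i j
    simp only [hMm, hX, hY, hVmid, Matrix.mul_smul, Matrix.mul_add, Matrix.sub_apply,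
      Matrix.smul_apply, Matrix.add_apply, smul_eq_mul]
    ring
  have hdiff_entry : ∀ i j, (S * U * Vhat - S * U * Vstar) i j = X i j - Y i j := by
    intro i j
    simp only [hX, hY, Matrix.sub_apply]
    ring
  -- summed Clarkson inequality
  have hWsum : lppM p (S * U * Vhat - S * U * Vstar) + (2:ℝ) ^ p * lppM p Mm ≤
      2 * (lppM p X + lppM p Y) := by
    have hpt : ∀ i j, |(S * U * Vhat - S * U * Vstar) i j| ^ p + (2:ℝ) ^ p * |Mm i j| ^ p ≤
        2 * (|X i j| ^ p + |Y i j| ^ p) := by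
      intro i j
      rw [hdiff_entry i j, hMid_entry i j]
      have h2 : (2:ℝ) ^ p * |(X i j + Y i j) / 2| ^ p = |X i j + Y i j| ^ p := by
        rw [abs_div, abs_two, ← Real.mul_rpow (by norm_num) (by positivity)]
        rw [mul_div_cancel₀ _ (by norm_num : (2:ℝ) ≠ 0)]
      rw [h2]
      have := aux_clarkson hp1' hp2' (X i j) (Y i j)
      linarith
    have e3 : lppM p (S * U * Vhat - S * U * Vstar) + (2:ℝ) ^ p * lppM p Mm =
        ∑ i, ∑ j, (|(S * U * Vhat - S * U * Vstar) i j| ^ p + (2:ℝ) ^ p * |Mm i j| ^ p) := by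
      simp only [lppM, Finset.mul_sum, Finset.sum_add_distrib]
    have e4 : 2 * (lppM p X + lppM p Y) = ∑ i, ∑ j, 2 * (|X i j| ^ p + |Y i j| ^ p) := by
      simp only [lppM, Finset.mul_sum, Finset.sum_add_distrib, mul_add]
    rw [e3, e4]
    exact Finset.sum_le_sum fun i _ => Finset.sum_le_sum fun j _ => hpt i j
  -- key bound : W ≤ 2 c (lppM p Y)
  have h2p : (2:ℝ) ≤ (2:ℝ) ^ p := by
    calc (2:ℝ) = (2:ℝ) ^ (1:ℝ) := (Real.rpow_one 2).symm
      _ ≤ (2:ℝ) ^ p := by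
          apply Real.rpow_le_rpow_left_iff (by norm_num : (1:ℝ) < 2) |>.2 hp1'
  have hW2 : lppM p (S * U * Vhat - S * U * Vstar) ≤ 2 * c * lppM p Y :=
    aux_arith hc hmM0 h2p hWsum ha1 ha2
  -- contraction: lppM p (U*Vhat - U*Vstar) ≤ c₂ * W
  have hcol : ∀ (x : Fin k → ℝ), lppV p (U.mulVec x) ≤ c₂ * lppV p ((S * U).mulVec x) := by
    intro x
    have h := hcon x
    rw [Matrix.mulVec_mulVec] at h
    rw [div_mul_eq_mul_div, one_mul, div_le_iff₀ hc₂] at h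
    linarith
  have hZ : lppM p (U * Vhat - U * Vstar) ≤ c₂ * lppM p (S * U * Vhat - S * U * Vstar) := by
    have e1 : lppM p (U * Vhat - U * Vstar) =
        ∑ j, lppV p (U.mulVec (fun i => (Vhat - Vstar) i j)) := by
      unfold lppM lppV
      rw [Finset.sum_comm]
      apply Finset.sum_congr rfl; intro j _
      apply Finset.sum_congr rfl; intro i _
      congr 2
      simp [Matrix.mulVec, dotProduct, Matrix.mul_apply, Matrix.sub_apply, mul_sub,
        Finset.sum_sub_distrib]
    have e2 : lppM p (S * U * Vhat - S * U * Vstar) =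
        ∑ j, lppV p ((S * U).mulVec (fun i => (Vhat - Vstar) i j)) := by
      unfold lppM lppV
      rw [Finset.sum_comm]
      apply Finset.sum_congr rfl; intro j _
      apply Finset.sum_congr rfl; intro i _
      congr 2
      simp [Matrix.mulVec, dotProduct, Matrix.mul_apply, Matrix.sub_apply, mul_sub,
        Finset.sum_sub_distrib]
    rw [e1, e2, Finset.mul_sum]
    exact Finset.sum_le_sum fun j _ => hcol _
  -- outer split
  have hfin : lppM p (U * Vhat - A) ≤
      (2:ℝ) ^ (p - 1) * (lppM p (U * Vhat - U * Vstar) + D) := by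
    have hpt : ∀ i j, |(U * Vhat - A) i j| ^ p ≤
        (2:ℝ) ^ (p - 1) * (|(U * Vhat - U * Vstar) i j| ^ p + |(U * Vstar - A) i j| ^ p) := by
      intro i j
      have e : (U * Vhat - A) i j = (U * Vhat - U * Vstar) i j + (U * Vstar - A) i j := by
        simp [Matrix.sub_apply]
      rw [e]
      exact aux_rpow_add_le hp1' _ _
    have e5 : (2:ℝ) ^ (p - 1) * (lppM p (U * Vhat - U * Vstar) + D) =
        ∑ i, ∑ j, (2:ℝ) ^ (p - 1) *
          (|(U * Vhat - U * Vstar) i j| ^ p + |(U * Vstar - A) i j| ^ p) := by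
      rw [hD]
      simp only [lppM, Finset.mul_sum, Finset.sum_add_distrib, mul_add]
    rw [e5]
    exact Finset.sum_le_sum fun i _ => Finset.sum_le_sum fun j _ => hpt i j
  -- put everything together
  have h2pm1 : (0:ℝ) ≤ (2:ℝ) ^ (p - 1) := Real.rpow_nonneg (by norm_num) _
  have hchain : lppM p (U * Vhat - U * Vstar) ≤ 2 * c * c₁ * c₂ * D := by
    have t1 : lppM p (U * Vhat - U * Vstar) ≤ c₂ * (2 * c * lppM p Y) := by
      refine hZ.trans ?_
      exact mul_le_mul_of_nonneg_left hW2 hc₂.le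
    have t2 : c₂ * (2 * c * lppM p Y) ≤ c₂ * (2 * c * (c₁ * D)) := by
      apply mul_le_mul_of_nonneg_left _ hc₂.le
      apply mul_le_mul_of_nonneg_left hβ (by positivity)
    calc lppM p (U * Vhat - U * Vstar) ≤ c₂ * (2 * c * (c₁ * D)) := t1.trans t2
      _ = 2 * c * c₁ * c₂ * D := by ring
  calc lppM p (U * Vhat - A) ≤ (2:ℝ) ^ (p - 1) * (lppM p (U * Vhat - U * Vstar) + D) := hfin
    _ ≤ (2:ℝ) ^ (p - 1) * (2 * c * c₁ * c₂ * D + c * D) := by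
        apply mul_le_mul_of_nonneg_left _ h2pm1
        have : D ≤ c * D := le_mul_of_one_le_left hD0 hc
        linarith
    _ = c * (2:ℝ) ^ (p - 1) * (2 * c₁ * c₂ + 1) * D := by ring
end
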